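/- arXiv:2310.17904 — 10 statements merged into one kernel-verified Lean document; each statement's English description precedes it below -/
import Mathlib

section
/- Let G be a simple graph and let u and w be distinct vertices of G. Then the two-element set {u,w} is a fort of G if and only if u and w are twins. Moreover, if u and w are twins, F is a fort of G, u ∈ F, and w ∉ F, then (F \ {u}) ∪ {w} is also a fort of G. -/
open Finset

/-- A fort of a graph: a nonempty (finite) set of vertices `F` such that no vertex
outside `F` has exactly one neighbor in `F`. -/
def IsFort {V : Type*} (G : SimpleGraph V) (F : Finset V) : Prop :=
  F.Nonempty ∧ ∀ v ∉ F, ¬ ∃! u, u ∈ F ∧ G.Adj v u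

/-- The fort number: the maximum cardinality of a collection of pairwise disjoint forts. -/
noncomputable def fortNumber {V : Type*} (G : SimpleGraph V) : ℕ :=
  sSup {k | ∃ 𝒞 : Finset (Finset V), (∀ F ∈ 𝒞, IsFort G F) ∧
    (↑𝒞 : Set (Finset V)).Pairwise Disjoint ∧ 𝒞.card = k}

/-- The fractional zero forcing number. -/
noncomputable def fracZ {V : Type*} [Fintype V] (G : SimpleGraph V) : ℝ :=
  sInf {x : ℝ | ∃ ω : V → ℝ, (∀ v, 0 ≤ ω v) ∧
    (∀ F : Finset V, IsFort G F → 1 ≤ ∑ v ∈ F, ω v) ∧ x = ∑ v, ω v}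

/-- The set of vertices eventually filled by the zero forcing process started at `S`. -/
inductive ZFForced {V : Type*} (G : SimpleGraph V) (S : Set V) : V → Prop
  | init (v : V) : v ∈ S → ZFForced G S v
  | force (u w : V) : G.Adj u w → ZFForced G S u →
      (∀ x, G.Adj u x → x ≠ w → ZFForced G S x) → ZFForced G S w

/-- A zero forcing set: starting from `S`, every vertex is eventually filled. -/
def IsZeroForcingSet {V : Type*} (G : SimpleGraph V) (S : Set V) : Prop :=
  ∀ v, ZFForced G S v

/-- The zero forcing number: minimum cardinality of a zero forcing set. -/
noncomputable def zfNumber {V : Type*} (G : SimpleGraph V) : ℕ :=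
  sInf {k | ∃ S : Finset V, IsZeroForcingSet G ↑S ∧ S.card = k}


/-- `{u,w}` is a fort iff `u,w` are twins; and a fort containing `u` but not `w`
stays a fort after swapping `u` for `w`. -/
theorem fort_pair_iff_twins {V : Type*} [DecidableEq V] (G : SimpleGraph V) (u w : V)
    (huw : u ≠ w) :
    (IsFort G {u, w} ↔ ∀ v, v ≠ u → v ≠ w → (G.Adj v u ↔ G.Adj v w)) ∧
    (∀ F : Finset V, (∀ v, v ≠ u → v ≠ w → (G.Adj v u ↔ G.Adj v w)) →
      IsFort G F → u ∈ F → w ∉ F → IsFort G (insert w (F.erase u))) := by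
  constructor
  · constructor
    · rintro ⟨-, hF⟩ v hvu hvw
      have hv : v ∉ ({u, w} : Finset V) := by simp [hvu, hvw]
      have h := hF v hv
      constructor
      · intro hadj
        by_contra hnadj
        exact h ⟨u, ⟨by simp, hadj⟩, by
          rintro y ⟨hy, hady⟩
          rcases mem_insert.1 hy with rfl | hy
          · rfl
          · simp only [mem_singleton] at hy; subst hy; exact absurd hady hnadj⟩
      · intro hadj
        by_contra hnadj
        exact h ⟨w, ⟨by simp, hadj⟩, by
          rintro y ⟨hy, hady⟩
          rcases mem_insert.1 hy with rfl | hy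
          · exact absurd hady hnadj
          · simpa using hy⟩
    · intro tw
      refine ⟨⟨u, by simp⟩, ?_⟩
      intro v hv
      rintro ⟨x, ⟨hx, hadj⟩, huniq⟩
      have hvu : v ≠ u := fun h => hv (by simp [h])
      have hvw : v ≠ w := fun h => hv (by simp [h])
      have htw := tw v hvu hvw
      rcases mem_insert.1 hx with rfl | hx
      · have : w = x := huniq w ⟨by simp, htw.1 hadj⟩
        exact huw this.symm
      · simp only [mem_singleton] at hx; subst hx
        have : u = x := huniq u ⟨by simp, htw.2 hadj⟩
        exact huw this
  · rintro F tw ⟨-, hF⟩ huF hwF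
    refine ⟨⟨w, mem_insert_self _ _⟩, ?_⟩
    intro v hv
    rintro ⟨x, ⟨hx, hadj⟩, huniq⟩
    -- basic facts
    have hvw : v ≠ w := fun h => hv (h ▸ mem_insert_self _ _)
    have hxu : x ≠ u := by
      rcases mem_insert.1 hx with rfl | hx
      · exact (Ne.symm huw)
      · exact (mem_erase.1 hx).1
    set v' : V := if v = u then w else v with hv'def
    have hv'F : v' ∉ F := by
      by_cases h : v = u
      · simpa [hv'def, h] using hwF
      · simp only [hv'def, if_neg h]
        intro hvF
        exact hv (mem_insert_of_mem (mem_erase.2 ⟨h, hvF⟩))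
    have hwu : w ≠ u := Ne.symm huw
    -- transfer adjacency: for x' := if x = w then u else x
    set x' : V := if x = w then u else x with hx'def
    have hx'F : x' ∈ F := by
      by_cases h : x = w
      · simpa [hx'def, h] using huF
      · simp only [hx'def, if_neg h]
        rcases mem_insert.1 hx with rfl | hx
        · exact absurd rfl h
        · exact mem_of_mem_erase hx
    have hadj' : G.Adj v' x' := by
      by_cases hvu : v = u <;> by_cases hxw : x = w <;>
        simp only [hv'def, hx'def, hvu, hxw, if_true, if_false, if_pos, if_neg,
          not_false_iff]
      · rw [hvu, hxw] at hadj; exact hadj.symm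
      · rw [hvu] at hadj; exact ((tw x hxu hxw).1 hadj.symm).symm
      · rw [hxw] at hadj; exact (tw v hvu hvw).2 hadj
      · exact hadj
    apply hF v' hv'F
    refine ⟨x', ⟨hx'F, hadj'⟩, ?_⟩
    rintro y ⟨hyF, hady⟩
    have hyw : y ≠ w := fun h => hwF (h ▸ hyF)
    set y' : V := if y = u then w else y with hy'def
    have hy'F' : y' ∈ insert w (F.erase u) := by
      by_cases h : y = u
      · simp [hy'def, h]
      · simp only [hy'def, if_neg h]
        exact mem_insert_of_mem (mem_erase.2 ⟨h, hyF⟩)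
    have hady' : G.Adj v y' := by
      have hady2 : G.Adj v' y := hady
      rw [hv'def] at hady2
      by_cases hvu : v = u <;> by_cases hyu : y = u <;>
        simp only [hy'def, hyu, if_true, if_false, if_pos, if_neg, not_false_iff]
      · rw [if_pos hvu] at hady2; rw [hyu] at hady2; rw [hvu]; exact hady2.symm
      · rw [if_pos hvu] at hady2; rw [hvu]; exact ((tw y hyu hyw).2 hady2.symm).symm
      · rw [if_neg hvu] at hady2; rw [hyu] at hady2; exact (tw v hvu hvw).1 hady2
      · rw [if_neg hvu] at hady2; exact hady2
    have heq : y' = x := huniq y' ⟨hy'F', hady'⟩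
    by_cases h : y = u
    · have hxw : x = w := by rw [← heq, hy'def, if_pos h]
      rw [h, hx'def, if_pos hxw]
    · have : y = x := by rw [← heq, hy'def, if_neg h]
      have hxw : x ≠ w := this ▸ hyw
      rw [this, hx'def, if_neg hxw]
end

section
/- Let n ≥ 2 and let K_n be the complete graph on n vertices. Then the fort number of K_n equals ⌊n/2⌋ and the fractional zero forcing number of K_n equals n/2. -/
open Finset

lemma fort_top_iff {n : ℕ} (hn : 2 ≤ n) (F : Finset (Fin n)) :
    IsFort (⊤ : SimpleGraph (Fin n)) F ↔ 2 ≤ F.card := by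
  constructor
  · rintro ⟨hne, h⟩
    by_contra hc
    push_neg at hc
    have h1 : F.card = 1 := le_antisymm (by omega) (Finset.card_pos.mpr hne)
    obtain ⟨a, ha⟩ := Finset.card_eq_one.mp h1
    obtain ⟨v, hv⟩ := Fintype.exists_ne_of_one_lt_card (by simp; omega) a
    refine h v (by simp [ha, hv]) ⟨a, ⟨by simp [ha], by simp [hv]⟩, ?_⟩
    rintro u ⟨hu, -⟩
    simpa [ha] using hu
  · intro h2
    refine ⟨Finset.card_pos.mp (by omega), ?_⟩
    rintro v hv ⟨u, ⟨huF, -⟩, huniq⟩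
    obtain ⟨w, hw, hwu⟩ := Finset.exists_mem_ne (s := F) (by omega) u
    exact hwu (huniq w ⟨hw, by simp; exact fun h => hv (h ▸ hw)⟩)

lemma fort_part (n : ℕ) (hn : 2 ≤ n) :
    fortNumber (⊤ : SimpleGraph (Fin n)) = n / 2 := by
  set S := {k | ∃ 𝒞 : Finset (Finset (Fin n)), (∀ F ∈ 𝒞, IsFort (⊤ : SimpleGraph (Fin n)) F) ∧
    (↑𝒞 : Set (Finset (Fin n))).Pairwise Disjoint ∧ 𝒞.card = k} with hS
  have hub : ∀ k ∈ S, k ≤ n / 2 := by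
    rintro k ⟨𝒞, hforts, hdisj, rfl⟩
    have hcard : ∀ F ∈ 𝒞, 2 ≤ F.card := fun F hF => (fort_top_iff hn F).mp (hforts F hF)
    have hbu : (𝒞.biUnion id).card = ∑ F ∈ 𝒞, F.card := by
      apply Finset.card_biUnion
      intro x hx y hy hxy
      exact hdisj hx hy hxy
    have h1 : 2 * 𝒞.card ≤ ∑ F ∈ 𝒞, F.card := by
      calc 2 * 𝒞.card = ∑ _F ∈ 𝒞, 2 := by rw [Finset.sum_const, smul_eq_mul, mul_comm]
      _ ≤ _ := Finset.sum_le_sum hcard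
    have h2 : (𝒞.biUnion id).card ≤ n := by
      simpa using Finset.card_le_card (Finset.subset_univ (𝒞.biUnion id))
    omega
  have hmem : n / 2 ∈ S := by
    set f : ℕ → Finset (Fin n) := fun i => univ.filter (fun v : Fin n => v.val = 2*i ∨ v.val = 2*i+1) with hf
    have hmemf : ∀ i (v : Fin n), v ∈ f i ↔ (v.val = 2*i ∨ v.val = 2*i+1) := by
      intro i v; simp [hf]
    refine ⟨(Finset.range (n/2)).image f, ?_, ?_, ?_⟩
    · intro F hF
      obtain ⟨i, hi, rfl⟩ := Finset.mem_image.mp hF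
      rw [Finset.mem_range] at hi
      rw [fort_top_iff hn]
      rw [← Nat.lt_iff_add_one_le, Finset.one_lt_card]
      refine ⟨⟨2*i, by omega⟩, ?_, ⟨2*i+1, by omega⟩, ?_, ?_⟩
      · rw [hmemf]; left; rfl
      · rw [hmemf]; right; rfl
      · simp [Fin.ext_iff]
    · intro F hF G hG hFG
      simp only [Finset.coe_image, Set.mem_image, Finset.mem_coe, Finset.mem_range] at hF hG
      obtain ⟨i, hi, rfl⟩ := hF
      obtain ⟨j, hj, rfl⟩ := hG
      have hij : i ≠ j := fun h => hFG (by rw [h])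
      rw [Finset.disjoint_left]
      intro v hv hv'
      rw [hmemf] at hv hv'
      omega
    · rw [Finset.card_image_of_injOn, Finset.card_range]
      intro i hi j hj hij
      rw [Finset.mem_coe, Finset.mem_range] at hi hj
      have : (⟨2*i, by omega⟩ : Fin n) ∈ f j := by
        rw [← hij, hmemf]; left; rfl
      rw [hmemf] at this
      simp only at this
      omega
  exact le_antisymm (csSup_le ⟨_, hmem⟩ hub) (le_csSup ⟨n/2, hub⟩ hmem)

lemma frac_part (n : ℕ) (hn : 2 ≤ n) :
    fracZ (⊤ : SimpleGraph (Fin n)) = (n : ℝ) / 2 := by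
  set S := {x : ℝ | ∃ ω : Fin n → ℝ, (∀ v, 0 ≤ ω v) ∧
    (∀ F : Finset (Fin n), IsFort (⊤ : SimpleGraph (Fin n)) F → 1 ≤ ∑ v ∈ F, ω v) ∧
    x = ∑ v, ω v} with hS
  have hmem : (n : ℝ) / 2 ∈ S := by
    refine ⟨fun _ => 1/2, fun _ => by norm_num, ?_, ?_⟩
    · intro F hF
      have h2 : 2 ≤ F.card := (fort_top_iff hn F).mp hF
      rw [Finset.sum_const, nsmul_eq_mul]
      have : (2 : ℝ) ≤ F.card := by exact_mod_cast h2
      linarith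
    · rw [Finset.sum_const, Finset.card_univ, Fintype.card_fin, nsmul_eq_mul]
      ring
  have hlb : ∀ x ∈ S, (n : ℝ) / 2 ≤ x := by
    rintro x ⟨ω, hpos, hfort, rfl⟩
    have key : ∀ u v : Fin n, u ≠ v → (1 : ℝ) ≤ ω u + ω v := by
      intro u v huv
      have hf : IsFort (⊤ : SimpleGraph (Fin n)) {u, v} := by
        rw [fort_top_iff hn, Finset.card_pair huv]
      simpa [Finset.sum_pair huv] using hfort {u, v} hf
    have hn1 : (0 : ℝ) < (n : ℝ) - 1 := by
      have : (2 : ℝ) ≤ n := by exact_mod_cast hn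
      linarith
    have hcast : ((n - 1 : ℕ) : ℝ) = (n : ℝ) - 1 := by
      rw [Nat.cast_sub (by omega)]; norm_num
    have hin : ∀ u : Fin n, ∑ v ∈ univ.erase u, (ω u + ω v)
        = ((n : ℝ) - 1) * ω u + ((∑ v, ω v) - ω u) := by
      intro u
      rw [Finset.sum_add_distrib, Finset.sum_const,
        Finset.card_erase_of_mem (Finset.mem_univ u), Finset.card_univ, Fintype.card_fin,
        Finset.sum_erase_eq_sub (Finset.mem_univ u), nsmul_eq_mul, hcast]
    have h1 : (n : ℝ) * ((n : ℝ) - 1) ≤ ∑ u : Fin n, ∑ v ∈ univ.erase u, (ω u + ω v) := by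
      have step : ∀ u : Fin n, ((n : ℝ) - 1) ≤ ∑ v ∈ univ.erase u, (ω u + ω v) := by
        intro u
        calc ((n : ℝ) - 1) = ∑ _v ∈ univ.erase u, (1 : ℝ) := by
              rw [Finset.sum_const, Finset.card_erase_of_mem (Finset.mem_univ u),
                Finset.card_univ, Fintype.card_fin, nsmul_eq_mul, hcast]
              ring
        _ ≤ _ := Finset.sum_le_sum fun v hv =>
              key u v (Ne.symm (Finset.ne_of_mem_erase hv))
      calc (n : ℝ) * ((n : ℝ) - 1) = ∑ _u : Fin n, ((n : ℝ) - 1) := by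
            rw [Finset.sum_const, Finset.card_univ, Fintype.card_fin, nsmul_eq_mul]
      _ ≤ _ := Finset.sum_le_sum fun u _ => step u
    have h2 : ∑ u : Fin n, ∑ v ∈ univ.erase u, (ω u + ω v)
        = 2 * ((n : ℝ) - 1) * ∑ v, ω v := by
      simp_rw [hin]
      rw [Finset.sum_add_distrib, ← Finset.mul_sum, Finset.sum_sub_distrib,
        Finset.sum_const, Finset.card_univ, Fintype.card_fin, nsmul_eq_mul]
      ring
    rw [h2] at h1
    nlinarith [h1, hn1]
  have hne : S.Nonempty := ⟨_, hmem⟩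
  have hbdd : BddBelow S := ⟨(n : ℝ) / 2, hlb⟩
  exact le_antisymm (csInf_le hbdd hmem) (le_csInf hne hlb)

/-- for `n ≥ 2`, `ft(K_n) = ⌊n/2⌋` and `Z*(K_n) = n/2`. -/
theorem completeGraph_fortNumber_fracZ (n : ℕ) (hn : 2 ≤ n) :
    fortNumber (⊤ : SimpleGraph (Fin n)) = n / 2 ∧
    fracZ (⊤ : SimpleGraph (Fin n)) = (n : ℝ) / 2 := by
  exact ⟨fort_part n hn, frac_part n hn⟩
end

section
/- Let p, q ≥ 2 and let K_{p,q} be the complete bipartite graph with parts of sizes p and q. Then the fort number of K_{p,q} equals ⌊p/2⌋ + ⌊q/2⌋ and the fractional zero forcing number of K_{p,q} equals (p+q)/2. -/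
open Finset

section CBAux

variable {p q : ℕ}


lemma cb_adj_inl (c : Fin p) (u : Fin p ⊕ Fin q) :
    (completeBipartiteGraph (Fin p) (Fin q)).Adj (Sum.inl c) u ↔ u.isRight := by
  simp [completeBipartiteGraph]

lemma cb_adj_inr (c : Fin q) (u : Fin p ⊕ Fin q) :
    (completeBipartiteGraph (Fin p) (Fin q)).Adj (Sum.inr c) u ↔ u.isLeft := by
  simp [completeBipartiteGraph]

lemma cb_eu_left (F : Finset (Fin p ⊕ Fin q)) (c : Fin p) :
    (∃! u, u ∈ F ∧ (completeBipartiteGraph (Fin p) (Fin q)).Adj (Sum.inl c) u)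
      ↔ F.toRight.card = 1 := by
  constructor
  · rintro ⟨u, ⟨hu, hadj⟩, huniq⟩
    rw [cb_adj_inl] at hadj
    obtain ⟨b, rfl⟩ := Sum.isRight_iff.mp hadj
    rw [Finset.card_eq_one]
    refine ⟨b, ?_⟩
    ext b'
    simp only [Finset.mem_toRight, Finset.mem_singleton]
    constructor
    · intro hb'
      exact Sum.inr.inj (huniq (Sum.inr b') ⟨hb', by rw [cb_adj_inl]; rfl⟩)
    · rintro rfl; exact hu
  · intro h
    obtain ⟨b, hb⟩ := Finset.card_eq_one.mp h
    refine ⟨Sum.inr b, ⟨?_, by rw [cb_adj_inl]; rfl⟩, ?_⟩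
    · exact Finset.mem_toRight.mp (hb ▸ Finset.mem_singleton_self b)
    · rintro u ⟨hu, hadj⟩
      rw [cb_adj_inl] at hadj
      obtain ⟨b', rfl⟩ := Sum.isRight_iff.mp hadj
      have : b' ∈ F.toRight := Finset.mem_toRight.mpr hu
      rw [hb, Finset.mem_singleton] at this
      rw [this]

lemma cb_eu_right (F : Finset (Fin p ⊕ Fin q)) (c : Fin q) :
    (∃! u, u ∈ F ∧ (completeBipartiteGraph (Fin p) (Fin q)).Adj (Sum.inr c) u)
      ↔ F.toLeft.card = 1 := by
  constructor
  · rintro ⟨u, ⟨hu, hadj⟩, huniq⟩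
    rw [cb_adj_inr] at hadj
    obtain ⟨b, rfl⟩ := Sum.isLeft_iff.mp hadj
    rw [Finset.card_eq_one]
    refine ⟨b, ?_⟩
    ext b'
    simp only [Finset.mem_toLeft, Finset.mem_singleton]
    constructor
    · intro hb'
      exact Sum.inl.inj (huniq (Sum.inl b') ⟨hb', by rw [cb_adj_inr]; rfl⟩)
    · rintro rfl; exact hu
  · intro h
    obtain ⟨b, hb⟩ := Finset.card_eq_one.mp h
    refine ⟨Sum.inl b, ⟨?_, by rw [cb_adj_inr]; rfl⟩, ?_⟩
    · exact Finset.mem_toLeft.mp (hb ▸ Finset.mem_singleton_self b)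
    · rintro u ⟨hu, hadj⟩
      rw [cb_adj_inr] at hadj
      obtain ⟨b', rfl⟩ := Sum.isLeft_iff.mp hadj
      have : b' ∈ F.toLeft := Finset.mem_toLeft.mpr hu
      rw [hb, Finset.mem_singleton] at this
      rw [this]


lemma cb_two_le_toRight (hp : 2 ≤ p) (hq : 2 ≤ q) {F : Finset (Fin p ⊕ Fin q)}
    (hF : IsFort (completeBipartiteGraph (Fin p) (Fin q)) F)
    (hA : F.toLeft.card ≤ 1) : 2 ≤ F.toRight.card := by
  obtain ⟨hne, hcond⟩ := hF
  obtain ⟨c, hc⟩ : ∃ c : Fin p, c ∉ F.toLeft := by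
    by_contra h
    push_neg at h
    have := Finset.eq_univ_iff_forall.mpr h
    rw [this, Finset.card_univ, Fintype.card_fin] at hA
    omega
  have hc' : Sum.inl c ∉ F := fun h => hc (Finset.mem_toLeft.mpr h)
  have hb1 : F.toRight.card ≠ 1 := fun h =>
    hcond _ hc' ((cb_eu_left F c).mpr h)
  rcases Nat.lt_or_ge F.toRight.card 2 with h2 | h2
  · exfalso
    have hb0 : F.toRight.card = 0 := by omega
    have hl : F.toLeft.card = 1 := by
      have h3 := F.card_toLeft_add_card_toRight
      have hFc : 1 ≤ F.card := Finset.card_pos.mpr hne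
      omega
    obtain ⟨b, hb⟩ : ∃ b : Fin q, b ∉ F.toRight := by
      refine ⟨⟨0, by omega⟩, fun h => ?_⟩
      have := Finset.card_pos.mpr ⟨_, h⟩
      omega
    have hb' : Sum.inr b ∉ F := fun h => hb (Finset.mem_toRight.mpr h)
    exact hcond _ hb' ((cb_eu_right F b).mpr hl)
  · exact h2

lemma cb_two_le_toLeft (hp : 2 ≤ p) (hq : 2 ≤ q) {F : Finset (Fin p ⊕ Fin q)}
    (hF : IsFort (completeBipartiteGraph (Fin p) (Fin q)) F)
    (hB : F.toRight.card ≤ 1) : 2 ≤ F.toLeft.card := by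
  obtain ⟨hne, hcond⟩ := hF
  obtain ⟨c, hc⟩ : ∃ c : Fin q, c ∉ F.toRight := by
    by_contra h
    push_neg at h
    have := Finset.eq_univ_iff_forall.mpr h
    rw [this, Finset.card_univ, Fintype.card_fin] at hB
    omega
  have hc' : Sum.inr c ∉ F := fun h => hc (Finset.mem_toRight.mpr h)
  have ha1 : F.toLeft.card ≠ 1 := fun h =>
    hcond _ hc' ((cb_eu_right F c).mpr h)
  rcases Nat.lt_or_ge F.toLeft.card 2 with h2 | h2
  · exfalso
    have ha0 : F.toLeft.card = 0 := by omega
    have hl : F.toRight.card = 1 := by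
      have h3 := F.card_toLeft_add_card_toRight
      have hFc : 1 ≤ F.card := Finset.card_pos.mpr hne
      omega
    obtain ⟨b, hb⟩ : ∃ b : Fin p, b ∉ F.toLeft := by
      refine ⟨⟨0, by omega⟩, fun h => ?_⟩
      have := Finset.card_pos.mpr ⟨_, h⟩
      omega
    have hb' : Sum.inl b ∉ F := fun h => hb (Finset.mem_toLeft.mpr h)
    exact hcond _ hb' ((cb_eu_left F b).mpr hl)
  · exact h2

lemma cb_collection_card_le (hp : 2 ≤ p) (hq : 2 ≤ q)
    (𝒞 : Finset (Finset (Fin p ⊕ Fin q)))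
    (hforts : ∀ F ∈ 𝒞, IsFort (completeBipartiteGraph (Fin p) (Fin q)) F)
    (hdisj : (↑𝒞 : Set (Finset (Fin p ⊕ Fin q))).Pairwise Disjoint) :
    𝒞.card ≤ p / 2 + q / 2 := by
  classical
  set 𝒞L := 𝒞.filter (fun F => 2 ≤ F.toLeft.card) with h𝒞L
  set 𝒞R := 𝒞.filter (fun F => ¬ 2 ≤ F.toLeft.card) with h𝒞R
  have hsplit : 𝒞L.card + 𝒞R.card = 𝒞.card :=
    Finset.card_filter_add_card_filter_not _
  have hL : 𝒞L.card ≤ p / 2 := by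
    have hdisj' : ∀ F ∈ 𝒞L, ∀ F' ∈ 𝒞L, F ≠ F' → Disjoint F.toLeft F'.toLeft := by
      intro F hF F' hF' hne
      have := hdisj (Finset.mem_filter.mp hF).1 (Finset.mem_filter.mp hF').1 hne
      rw [Finset.disjoint_left] at this ⊢
      intro a haF haF'
      exact this (Finset.mem_toLeft.mp haF) (Finset.mem_toLeft.mp haF')
    have key : 2 * 𝒞L.card ≤ p := by
      calc 2 * 𝒞L.card = ∑ _F ∈ 𝒞L, 2 := by rw [Finset.sum_const, smul_eq_mul, mul_comm]
      _ ≤ ∑ F ∈ 𝒞L, F.toLeft.card :=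
          Finset.sum_le_sum (fun F hF => (Finset.mem_filter.mp hF).2)
      _ = (𝒞L.biUnion Finset.toLeft).card := (Finset.card_biUnion hdisj').symm
      _ ≤ Fintype.card (Fin p) := Finset.card_le_univ _
      _ = p := Fintype.card_fin p
    omega
  have hR : 𝒞R.card ≤ q / 2 := by
    have hdisj' : ∀ F ∈ 𝒞R, ∀ F' ∈ 𝒞R, F ≠ F' → Disjoint F.toRight F'.toRight := by
      intro F hF F' hF' hne
      have := hdisj (Finset.mem_filter.mp hF).1 (Finset.mem_filter.mp hF').1 hne
      rw [Finset.disjoint_left] at this ⊢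
      intro a haF haF'
      exact this (Finset.mem_toRight.mp haF) (Finset.mem_toRight.mp haF')
    have key : 2 * 𝒞R.card ≤ q := by
      calc 2 * 𝒞R.card = ∑ _F ∈ 𝒞R, 2 := by rw [Finset.sum_const, smul_eq_mul, mul_comm]
      _ ≤ ∑ F ∈ 𝒞R, F.toRight.card := by
          refine Finset.sum_le_sum (fun F hF => ?_)
          have hm := Finset.mem_filter.mp hF
          exact cb_two_le_toRight hp hq (hforts F hm.1) (by omega)
      _ = (𝒞R.biUnion Finset.toRight).card := (Finset.card_biUnion hdisj').symm
      _ ≤ Fintype.card (Fin q) := Finset.card_le_univ _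
      _ = q := Fintype.card_fin q
    omega
  omega



lemma cb_fort_pairL (x y : Fin p) (hxy : x ≠ y) :
    IsFort (completeBipartiteGraph (Fin p) (Fin q))
      ({Sum.inl x, Sum.inl y} : Finset (Fin p ⊕ Fin q)) := by
  constructor
  · exact ⟨Sum.inl x, by simp⟩
  · rintro v hv ⟨u, ⟨hu, hadj⟩, huniq⟩
    simp only [Finset.mem_insert, Finset.mem_singleton] at hu
    rcases v with c | c
    · rcases hu with rfl | rfl <;> simp [completeBipartiteGraph] at hadj
    · have h1 : Sum.inl x = u := huniq (Sum.inl x) ⟨by simp, by simp [completeBipartiteGraph]⟩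
      have h2 : Sum.inl y = u := huniq (Sum.inl y) ⟨by simp, by simp [completeBipartiteGraph]⟩
      exact hxy (Sum.inl.inj (h1.trans h2.symm))

lemma cb_fort_pairR (x y : Fin q) (hxy : x ≠ y) :
    IsFort (completeBipartiteGraph (Fin p) (Fin q))
      ({Sum.inr x, Sum.inr y} : Finset (Fin p ⊕ Fin q)) := by
  constructor
  · exact ⟨Sum.inr x, by simp⟩
  · rintro v hv ⟨u, ⟨hu, hadj⟩, huniq⟩
    simp only [Finset.mem_insert, Finset.mem_singleton] at hu
    rcases v with c | c
    · have h1 : Sum.inr x = u := huniq (Sum.inr x) ⟨by simp, by simp [completeBipartiteGraph]⟩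
      have h2 : Sum.inr y = u := huniq (Sum.inr y) ⟨by simp, by simp [completeBipartiteGraph]⟩
      exact hxy (Sum.inr.inj (h1.trans h2.symm))
    · rcases hu with rfl | rfl <;> simp [completeBipartiteGraph] at hadj

def cbPairL (p q : ℕ) (i : Fin (p / 2)) : Finset (Fin p ⊕ Fin q) :=
  {Sum.inl ⟨2 * i, by have := i.isLt; omega⟩, Sum.inl ⟨2 * i + 1, by have := i.isLt; omega⟩}

def cbPairR (p q : ℕ) (i : Fin (q / 2)) : Finset (Fin p ⊕ Fin q) :=
  {Sum.inr ⟨2 * i, by have := i.isLt; omega⟩, Sum.inr ⟨2 * i + 1, by have := i.isLt; omega⟩}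

lemma cb_mem_pairL {i : Fin (p / 2)} {u : Fin p ⊕ Fin q} :
    u ∈ cbPairL p q i ↔ (∃ a : Fin p, u = Sum.inl a ∧ ((a : ℕ) = 2 * i ∨ (a : ℕ) = 2 * i + 1)) := by
  simp only [cbPairL, Finset.mem_insert, Finset.mem_singleton]
  constructor
  · rintro (rfl | rfl)
    · exact ⟨_, rfl, Or.inl rfl⟩
    · exact ⟨_, rfl, Or.inr rfl⟩
  · rintro ⟨a, rfl, h | h⟩
    · left; congr 1; exact Fin.ext h
    · right; congr 1; exact Fin.ext h

lemma cb_mem_pairR {i : Fin (q / 2)} {u : Fin p ⊕ Fin q} :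
    u ∈ cbPairR p q i ↔ (∃ a : Fin q, u = Sum.inr a ∧ ((a : ℕ) = 2 * i ∨ (a : ℕ) = 2 * i + 1)) := by
  simp only [cbPairR, Finset.mem_insert, Finset.mem_singleton]
  constructor
  · rintro (rfl | rfl)
    · exact ⟨_, rfl, Or.inl rfl⟩
    · exact ⟨_, rfl, Or.inr rfl⟩
  · rintro ⟨a, rfl, h | h⟩
    · left; congr 1; exact Fin.ext h
    · right; congr 1; exact Fin.ext h

noncomputable def cbColl (p q : ℕ) : Finset (Finset (Fin p ⊕ Fin q)) :=
  (Finset.univ.image (cbPairL p q)) ∪ (Finset.univ.image (cbPairR p q))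

lemma cbPairL_disjoint {i j : Fin (p / 2)} (hij : i ≠ j) :
    Disjoint (cbPairL p q i) (cbPairL p q j) := by
  rw [Finset.disjoint_left]
  intro u hi hj
  rw [cb_mem_pairL] at hi hj
  obtain ⟨a, rfl, h1⟩ := hi
  obtain ⟨a', ha', h2⟩ := hj
  have : a = a' := Sum.inl.inj ha'
  subst this
  have : (i : ℕ) ≠ (j : ℕ) := fun h => hij (Fin.ext h)
  omega

lemma cbPairR_disjoint {i j : Fin (q / 2)} (hij : i ≠ j) :
    Disjoint (cbPairR p q i) (cbPairR p q j) := by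
  rw [Finset.disjoint_left]
  intro u hi hj
  rw [cb_mem_pairR] at hi hj
  obtain ⟨a, rfl, h1⟩ := hi
  obtain ⟨a', ha', h2⟩ := hj
  have : a = a' := Sum.inr.inj ha'
  subst this
  have : (i : ℕ) ≠ (j : ℕ) := fun h => hij (Fin.ext h)
  omega

lemma cbPairLR_disjoint (i : Fin (p / 2)) (j : Fin (q / 2)) :
    Disjoint (cbPairL p q i) (cbPairR p q j) := by
  rw [Finset.disjoint_left]
  intro u hi hj
  rw [cb_mem_pairL] at hi
  rw [cb_mem_pairR] at hj
  obtain ⟨a, rfl, -⟩ := hi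
  obtain ⟨a', ha', -⟩ := hj
  exact Sum.inl_ne_inr ha'

lemma cbPairL_injective : Function.Injective (cbPairL p q) := by
  intro i j h
  by_contra hij
  have := cbPairL_disjoint (p := p) (q := q) hij
  rw [h, disjoint_self] at this
  have : Sum.inl (⟨2 * j, by have := j.isLt; omega⟩ : Fin p) ∈ (⊥ : Finset (Fin p ⊕ Fin q)) := by
    rw [← this]; exact Finset.mem_insert_self _ _
  simp at this

lemma cbPairR_injective : Function.Injective (cbPairR p q) := by
  intro i j h
  by_contra hij
  have := cbPairR_disjoint (p := p) (q := q) hij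
  rw [h, disjoint_self] at this
  have : Sum.inr (⟨2 * j, by have := j.isLt; omega⟩ : Fin q) ∈ (⊥ : Finset (Fin p ⊕ Fin q)) := by
    rw [← this]; exact Finset.mem_insert_self _ _
  simp at this

lemma cbColl_forts : ∀ F ∈ cbColl p q, IsFort (completeBipartiteGraph (Fin p) (Fin q)) F := by
  intro F hF
  rw [cbColl, Finset.mem_union] at hF
  rcases hF with hF | hF <;> obtain ⟨i, -, rfl⟩ := Finset.mem_image.mp hF
  · refine cb_fort_pairL _ _ (fun h => ?_)
    have : (2 * (i : ℕ)) = 2 * (i : ℕ) + 1 := congrArg Fin.val h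
    omega
  · refine cb_fort_pairR _ _ (fun h => ?_)
    have : (2 * (i : ℕ)) = 2 * (i : ℕ) + 1 := congrArg Fin.val h
    omega

lemma cbColl_pairwise :
    (↑(cbColl p q) : Set (Finset (Fin p ⊕ Fin q))).Pairwise Disjoint := by
  intro F hF F' hF' hne
  simp only [cbColl, Finset.coe_union, Finset.coe_image, Finset.coe_univ, Set.image_univ,
    Set.mem_union, Set.mem_range] at hF hF'
  rcases hF with ⟨i, rfl⟩ | ⟨i, rfl⟩ <;> rcases hF' with ⟨j, rfl⟩ | ⟨j, rfl⟩
  · exact cbPairL_disjoint (fun h => hne (by rw [h]))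
  · exact cbPairLR_disjoint i j
  · exact (cbPairLR_disjoint j i).symm
  · exact cbPairR_disjoint (fun h => hne (by rw [h]))

lemma cbColl_card : (cbColl p q).card = p / 2 + q / 2 := by
  classical
  have hd : Disjoint (Finset.univ.image (cbPairL p q)) (Finset.univ.image (cbPairR p q)) := by
    rw [Finset.disjoint_left]
    intro F hF hF'
    obtain ⟨i, -, rfl⟩ := Finset.mem_image.mp hF
    obtain ⟨j, -, hj⟩ := Finset.mem_image.mp hF'
    have := cbPairLR_disjoint (p := p) (q := q) i j
    rw [hj, disjoint_self] at this
    have : Sum.inl (⟨2 * i, by have := i.isLt; omega⟩ : Fin p) ∈ (⊥ : Finset (Fin p ⊕ Fin q)) := by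
      rw [← this]; exact Finset.mem_insert_self _ _
    simp at this
  rw [cbColl, Finset.card_union_of_disjoint hd,
    Finset.card_image_of_injective _ cbPairL_injective,
    Finset.card_image_of_injective _ cbPairR_injective, Finset.card_univ, Finset.card_univ,
    Fintype.card_fin, Fintype.card_fin]


lemma cb_half_le_sum {p : ℕ} (hp : 2 ≤ p) (ω : Fin p → ℝ)
    (hpair : ∀ x y : Fin p, x ≠ y → 1 ≤ ω x + ω y) :
    (p : ℝ) / 2 ≤ ∑ x, ω x := by
  have hcard : ∀ x : Fin p, ((Finset.univ.erase x).card : ℝ) = (p : ℝ) - 1 := by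
    intro x
    rw [Finset.card_erase_of_mem (Finset.mem_univ x), Finset.card_univ, Fintype.card_fin]
    push_cast [Nat.cast_sub (by omega : 1 ≤ p)]
    ring
  have h1 : ∀ x : Fin p, ((p : ℝ) - 1) ≤ ∑ y ∈ Finset.univ.erase x, (ω x + ω y) := by
    intro x
    have := Finset.card_nsmul_le_sum (Finset.univ.erase x) (fun y => ω x + ω y) 1
      (fun y hy => hpair x y (Ne.symm (Finset.mem_erase.mp hy).1))
    rw [nsmul_eq_mul, mul_one] at this
    calc ((p : ℝ) - 1) = ((Finset.univ.erase x).card : ℝ) := (hcard x).symm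
    _ ≤ _ := this
  have h3 : ∀ x : Fin p, ∑ y ∈ Finset.univ.erase x, (ω x + ω y)
      = ((p : ℝ) - 1) * ω x + ((∑ y, ω y) - ω x) := by
    intro x
    rw [Finset.sum_add_distrib, Finset.sum_const, Finset.sum_erase_eq_sub (Finset.mem_univ x),
      nsmul_eq_mul, hcard x]
  have h2 : (p : ℝ) * ((p : ℝ) - 1) ≤ ∑ x : Fin p, (((p : ℝ) - 1) * ω x + ((∑ y, ω y) - ω x)) := by
    calc (p : ℝ) * ((p : ℝ) - 1) = ∑ _x : Fin p, ((p : ℝ) - 1) := by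
          rw [Finset.sum_const, Finset.card_univ, Fintype.card_fin, nsmul_eq_mul]
    _ ≤ _ := Finset.sum_le_sum (fun x _ => (h1 x).trans_eq (h3 x))
  have h4 : ∑ x : Fin p, (((p : ℝ) - 1) * ω x + ((∑ y, ω y) - ω x))
      = (2 * (p : ℝ) - 2) * ∑ x, ω x := by
    rw [Finset.sum_add_distrib, ← Finset.mul_sum, Finset.sum_sub_distrib, Finset.sum_const,
      Finset.card_univ, Fintype.card_fin, nsmul_eq_mul]
    ring
  rw [h4] at h2
  have hp' : (2 : ℝ) ≤ (p : ℝ) := by exact_mod_cast hp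
  nlinarith [h2, hp']

end CBAux

/-- for `p, q ≥ 2`, `ft(K_{p,q}) = ⌊p/2⌋ + ⌊q/2⌋` and `Z*(K_{p,q}) = (p+q)/2`. -/
theorem completeBipartite_fortNumber_fracZ (p q : ℕ) (hp : 2 ≤ p) (hq : 2 ≤ q) :
    fortNumber (completeBipartiteGraph (Fin p) (Fin q)) = p / 2 + q / 2 ∧
    fracZ (completeBipartiteGraph (Fin p) (Fin q)) = ((p : ℝ) + q) / 2 := by
  have hcard2 : ∀ F : Finset (Fin p ⊕ Fin q),
      IsFort (completeBipartiteGraph (Fin p) (Fin q)) F → 2 ≤ F.card := by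
    intro F hF
    rcases le_or_gt 2 F.toLeft.card with h | h
    · exact h.trans F.card_toLeft_le
    · exact (cb_two_le_toRight hp hq hF (by omega)).trans F.card_toRight_le
  constructor
  · -- fort number
    have hub : ∀ k ∈ {k | ∃ 𝒞 : Finset (Finset (Fin p ⊕ Fin q)),
        (∀ F ∈ 𝒞, IsFort (completeBipartiteGraph (Fin p) (Fin q)) F) ∧
        (↑𝒞 : Set (Finset (Fin p ⊕ Fin q))).Pairwise Disjoint ∧ 𝒞.card = k},
        k ≤ p / 2 + q / 2 := by
      rintro k ⟨𝒞, h1, h2, rfl⟩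
      exact cb_collection_card_le hp hq 𝒞 h1 h2
    have hmem : p / 2 + q / 2 ∈ {k | ∃ 𝒞 : Finset (Finset (Fin p ⊕ Fin q)),
        (∀ F ∈ 𝒞, IsFort (completeBipartiteGraph (Fin p) (Fin q)) F) ∧
        (↑𝒞 : Set (Finset (Fin p ⊕ Fin q))).Pairwise Disjoint ∧ 𝒞.card = k} :=
      ⟨cbColl p q, cbColl_forts, cbColl_pairwise, cbColl_card⟩
    exact le_antisymm (csSup_le ⟨_, hmem⟩ hub) (le_csSup ⟨_, fun k hk => hub k hk⟩ hmem)
  · -- fractional zero forcing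
    have hmem : ((p : ℝ) + q) / 2 ∈ {x : ℝ | ∃ ω : (Fin p ⊕ Fin q) → ℝ, (∀ v, 0 ≤ ω v) ∧
        (∀ F : Finset (Fin p ⊕ Fin q),
          IsFort (completeBipartiteGraph (Fin p) (Fin q)) F → 1 ≤ ∑ v ∈ F, ω v) ∧
        x = ∑ v, ω v} := by
      refine ⟨fun _ => 1 / 2, fun v => by norm_num, fun F hF => ?_, ?_⟩
      · rw [Finset.sum_const, nsmul_eq_mul]
        have h2 := hcard2 F hF
        have : (2 : ℝ) ≤ (F.card : ℝ) := by exact_mod_cast h2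
        linarith
      · rw [Finset.sum_const, Finset.card_univ, Fintype.card_sum, Fintype.card_fin,
          Fintype.card_fin, nsmul_eq_mul]
        push_cast
        ring
    have hlb : ∀ x ∈ {x : ℝ | ∃ ω : (Fin p ⊕ Fin q) → ℝ, (∀ v, 0 ≤ ω v) ∧
        (∀ F : Finset (Fin p ⊕ Fin q),
          IsFort (completeBipartiteGraph (Fin p) (Fin q)) F → 1 ≤ ∑ v ∈ F, ω v) ∧
        x = ∑ v, ω v}, ((p : ℝ) + q) / 2 ≤ x := by
      rintro x ⟨ω, hnn, hfort, rfl⟩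
      have hL : (p : ℝ) / 2 ≤ ∑ a : Fin p, ω (Sum.inl a) := by
        refine cb_half_le_sum hp _ (fun x y hxy => ?_)
        have h := hfort {Sum.inl x, Sum.inl y} (cb_fort_pairL x y hxy)
        rwa [Finset.sum_pair (fun h' => hxy (Sum.inl.inj h'))] at h
      have hR : (q : ℝ) / 2 ≤ ∑ b : Fin q, ω (Sum.inr b) := by
        refine cb_half_le_sum hq _ (fun x y hxy => ?_)
        have h := hfort {Sum.inr x, Sum.inr y} (cb_fort_pairR x y hxy)
        rwa [Finset.sum_pair (fun h' => hxy (Sum.inr.inj h'))] at h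
      rw [Fintype.sum_sum_type]
      linarith
    exact le_antisymm (csInf_le ⟨_, fun x hx => hlb x hx⟩ hmem) (le_csInf ⟨_, hmem⟩ hlb)
end

section
/- Let k ≥ 1 and let C_{2k+1} be the cycle graph on 2k+1 vertices. Then the fractional zero forcing number of C_{2k+1} equals (2k+1)/(k+1), and the fort number of C_{2k+1} equals 1. -/
open Finset

/-!
Walking around the cycle, a vertex outside a fort whose successor is also outside would force the
fort to be empty, so `v ↦ v + 1` maps the complement of a fort injectively into the fort: every
fort of `C_n` contains at least half of the vertices. For `n = 2k + 1` two forts must therefore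
meet, so the fort number is `1`, and the constant weight `1 / (k + 1)` is feasible. Conversely, the
complement of the independent set `{0, 2, …, 2k - 2}` is a fort with `k + 1` vertices, and summing
the constraint over its `2k + 1` rotations gives `2k + 1 ≤ (k + 1) ∑ ω`.
-/

open SimpleGraph

section Forts

variable {V : Type*} {G : SimpleGraph V}

theorem IsFort.map {W : Type*} {H : SimpleGraph W} {F : Finset V} (hF : IsFort G F)
    (e : G ≃g H) : IsFort H (F.map e.toEquiv.toEmbedding) := by
  refine ⟨hF.1.map, fun w hw ⟨u, ⟨hu, hadj⟩, huniq⟩ => ?_⟩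
  obtain ⟨v, rfl⟩ := e.surjective w
  obtain ⟨u, huF, rfl⟩ := mem_map.mp hu
  refine hF.2 v (fun hv => hw (mem_map_of_mem _ hv))
    ⟨u, ⟨huF, e.map_adj_iff.mp hadj⟩, fun y hy => e.injective ?_⟩
  exact huniq (e y) ⟨mem_map_of_mem _ hy.1, e.map_adj_iff.mpr hy.2⟩

theorem isFort_univ [Fintype V] [Nonempty V] : IsFort G univ :=
  ⟨univ_nonempty, fun v hv => absurd (mem_univ v) hv⟩

theorem isFort_compl_of_isIndepSet [Fintype V] [DecidableEq V] {I : Finset V}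
    (hI : G.IsIndepSet I) (hdeg : ∀ v ∈ I, ¬∃! u, G.Adj v u) (hne : Iᶜ.Nonempty) :
    IsFort G Iᶜ := by
  refine ⟨hne, fun v hv => ?_⟩
  rw [notMem_compl] at hv
  convert hdeg v hv using 3 with u
  exact ⟨And.right, fun hadj => ⟨mem_compl.2 fun hu => hI hv hu hadj.ne hadj, hadj⟩⟩

theorem fortNumber_eq_one_of_not_disjoint [Fintype V] [Nonempty V]
    (h : ∀ F₁ F₂, IsFort G F₁ → IsFort G F₂ → ¬Disjoint F₁ F₂) : fortNumber G = 1 := by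
  unfold fortNumber
  refine le_antisymm (csSup_le ⟨1, ?one⟩ ?bound) (le_csSup ⟨1, ?bound⟩ ?one)
  case one => exact ⟨{univ}, by simpa using isFort_univ, by simp, card_singleton _⟩
  case bound =>
    rintro _ ⟨𝒞, hfort, hdisj, rfl⟩
    exact card_le_one.2 fun a ha b hb =>
      by_contra fun hab => h a b (hfort a ha) (hfort b hb) (hdisj ha hb hab)

end Forts

section FracZ

variable {V : Type*} [Fintype V] {G : SimpleGraph V}

theorem fracZ_le_sum {ω : V → ℝ} (h0 : ∀ v, 0 ≤ ω v)
    (h1 : ∀ F, IsFort G F → 1 ≤ ∑ v ∈ F, ω v) : fracZ G ≤ ∑ v, ω v :=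
  csInf_le ⟨0, by rintro _ ⟨ω, h0, -, rfl⟩; exact sum_nonneg fun v _ => h0 v⟩ ⟨ω, h0, h1, rfl⟩

theorem le_fracZ {x : ℝ} (h : ∀ ω : V → ℝ, (∀ v, 0 ≤ ω v) →
    (∀ F, IsFort G F → 1 ≤ ∑ v ∈ F, ω v) → x ≤ ∑ v, ω v) : x ≤ fracZ G := by
  refine le_csInf ⟨_, fun _ => 1, fun _ => zero_le_one, fun F hF => ?_, rfl⟩ ?_
  · simpa using hF.1.card_pos
  · rintro _ ⟨ω, h0, h1, rfl⟩
    exact h ω h0 h1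

theorem fracZ_le_card_div {m : ℕ} (hm : 0 < m) (h : ∀ F, IsFort G F → m ≤ #F) :
    fracZ G ≤ Fintype.card V / m := by
  have hm' : (0 : ℝ) < m := by exact_mod_cast hm
  convert fracZ_le_sum (ω := fun _ => (m : ℝ)⁻¹) (fun _ => by positivity) fun F hF => ?_ using 1
  · simp [div_eq_mul_inv]
  · rw [sum_const, nsmul_eq_mul, ← div_eq_mul_inv, one_le_div hm']
    exact_mod_cast h F hF

theorem card_div_le_fracZ [AddGroup V] (hG : ∀ c u v, G.Adj (c + u) (c + v) ↔ G.Adj u v)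
    {F : Finset V} (hF : IsFort G F) : Fintype.card V / #F ≤ fracZ G := by
  refine le_fracZ fun ω _ h1 => ?_
  have hshift (c : V) : IsFort G (F.map (Equiv.addLeft c).toEmbedding) :=
    hF.map { toEquiv := Equiv.addLeft c, map_rel_iff' := hG c _ _ }
  rw [div_le_iff₀ (by exact_mod_cast hF.1.card_pos)]
  calc (Fintype.card V : ℝ) = ∑ _c : V, 1 := by simp
    _ ≤ ∑ c : V, ∑ u ∈ F, ω (c + u) := sum_le_sum fun c _ => by simpa using h1 _ (hshift c)
    _ = ∑ u ∈ F, ∑ v, ω v := by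
      rw [sum_comm]
      exact sum_congr rfl fun u _ => Equiv.sum_comp (Equiv.addRight u) ω
    _ = (∑ v, ω v) * #F := by rw [sum_const, nsmul_eq_mul, mul_comm]

end FracZ

section Cycle

open Fin.NatCast

variable {n : ℕ} [NeZero n]

theorem cycleGraph_adj_iff (hn : 2 ≤ n) {u v : Fin n} :
    (cycleGraph n).Adj u v ↔ v = u + 1 ∨ v = u - 1 := by
  obtain ⟨m, rfl⟩ : ∃ m, n = m + 2 := ⟨n - 2, by omega⟩
  rw [← mem_neighborSet, cycleGraph_neighborSet]
  simp [or_comm]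

theorem cycleGraph_add_left_adj (c u v : Fin n) :
    (cycleGraph n).Adj (c + u) (c + v) ↔ (cycleGraph n).Adj u v := by
  simp only [cycleGraph_adj', add_sub_add_left_eq_sub]

theorem cycleGraph_not_existsUnique_adj (hn : 3 ≤ n) (v : Fin n) :
    ¬∃! u, (cycleGraph n).Adj v u := by
  obtain ⟨m, rfl⟩ : ∃ m, n = m + 3 := ⟨n - 3, by omega⟩
  rw [← degree_eq_one_iff_existsUnique_adj, cycleGraph_degree_three_le]
  omega

theorem IsFort.cycleGraph_add_one_mem (hn : 2 ≤ n) {F : Finset (Fin n)}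
    (hF : IsFort (cycleGraph n) F) {v : Fin n} (hv : v ∉ F) : v + 1 ∈ F := by
  have hstep (w : Fin n) (hw₁ : w - 1 ∉ F) (hw : w ∉ F) : w + 1 ∉ F := fun hw₂ =>
    hF.2 w hw ⟨w + 1, ⟨hw₂, (cycleGraph_adj_iff hn).2 (.inl rfl)⟩, fun u ⟨hu, hadj⟩ =>
      ((cycleGraph_adj_iff hn).1 hadj).resolve_right (by rintro rfl; exact hw₁ hu)⟩
  by_contra hv₁
  have hout (j : ℕ) : v + j ∉ F ∧ v + (j + 1 : ℕ) ∉ F := by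
    induction j with
    | zero => simpa using ⟨hv, hv₁⟩
    | succ j ih =>
      refine ⟨ih.2, ?_⟩
      have := hstep _ ?_ ih.2
      · rwa [Nat.cast_succ (j + 1), ← add_assoc]
      · rw [Nat.cast_succ, ← add_assoc, add_sub_cancel_right]
        exact ih.1
  obtain ⟨u, hu⟩ := hF.1
  exact (hout (u - v).val).1 (by simpa using hu)

theorem IsFort.cycleGraph_le_two_mul_card (hn : 2 ≤ n) {F : Finset (Fin n)}
    (hF : IsFort (cycleGraph n) F) : n ≤ 2 * #F := by
  classical
  have hcompl : #Fᶜ ≤ #F := card_le_card_of_injOn (· + 1)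
    (fun v hv => hF.cycleGraph_add_one_mem hn (mem_compl.1 hv)) fun _ _ _ _ => add_right_cancel
  have := card_add_card_compl F
  rw [Fintype.card_fin] at this
  omega

theorem exists_isFort_cycleGraph_card_eq (hn : 3 ≤ n) :
    ∃ F : Finset (Fin n), IsFort (cycleGraph n) F ∧ #F = n - n / 2 := by
  classical
  have hcast {a b : ℕ} (ha : a < n) (hb : b < n) (h : (a : Fin n) = b) : a = b := by
    simpa [Fin.val_cast_of_lt ha, Fin.val_cast_of_lt hb] using congrArg Fin.val h
  set I := (range (n / 2)).image fun j : ℕ => ((2 * j : ℕ) : Fin n)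
  have hI : #I = n / 2 := by
    rw [card_image_of_injOn, card_range]
    intro a ha b hb h
    simp only [coe_range, Set.mem_Iio] at ha hb
    have := hcast (by omega) (by omega) h
    omega
  have hindep : (cycleGraph n).IsIndepSet I := by
    intro _ hu _ hv _ hadj
    obtain ⟨a, ha, rfl⟩ := mem_image.1 hu
    obtain ⟨b, hb, rfl⟩ := mem_image.1 hv
    rw [mem_range] at ha hb
    rcases (cycleGraph_adj_iff (by omega)).1 hadj with h | h
    · have := hcast (a := 2 * b) (b := 2 * a + 1) (by omega) (by omega) (by rw [h, Nat.cast_succ])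
      omega
    · have := hcast (a := 2 * b + 1) (b := 2 * a) (by omega) (by omega)
        (by rw [Nat.cast_succ, h, sub_add_cancel])
      omega
  refine ⟨Iᶜ, isFort_compl_of_isIndepSet hindep
    (fun v _ => cycleGraph_not_existsUnique_adj hn v) ?_, ?_⟩
  · rw [← card_pos, card_compl, Fintype.card_fin, hI]
    omega
  · rw [card_compl, Fintype.card_fin, hI]

end Cycle

/-- for `k ≥ 1`, `Z*(C_{2k+1}) = (2k+1)/(k+1)` and `ft(C_{2k+1}) = 1`. -/
theorem oddCycle_fracZ_fortNumber (k : ℕ) (hk : 1 ≤ k) :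
    fracZ (SimpleGraph.cycleGraph (2 * k + 1)) = (2 * (k : ℝ) + 1) / ((k : ℝ) + 1) ∧
    fortNumber (SimpleGraph.cycleGraph (2 * k + 1)) = 1 := by
  have hcard (F) (hF : IsFort (cycleGraph (2 * k + 1)) F) : k + 1 ≤ #F := by
    have := hF.cycleGraph_le_two_mul_card (by omega)
    omega
  obtain ⟨F₀, hF₀, hF₀card⟩ := exists_isFort_cycleGraph_card_eq (n := 2 * k + 1) (by omega)
  replace hF₀card : #F₀ = k + 1 := by omega
  refine ⟨le_antisymm ?_ ?_, fortNumber_eq_one_of_not_disjoint fun F₁ F₂ h₁ h₂ hdisj => ?_⟩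
  · simpa using fracZ_le_card_div k.succ_pos hcard
  · simpa [hF₀card] using card_div_le_fracZ cycleGraph_add_left_adj hF₀
  · have hunion := card_le_univ (F₁ ∪ F₂)
    rw [card_union_of_disjoint hdisj, Fintype.card_fin] at hunion
    linarith [hcard F₁ h₁, hcard F₂ h₂]
end

section
/- Let G' be a finite simple graph of order r ≥ 2 and let G = G' ∘ 2K₁ be the corona of G' with the empty graph on two vertices (so G is obtained from G' by attaching two new pendant vertices to each vertex of G'). Then ft(G) = Z*(G) = Z(G) = r. -/
open Finset

/-- The corona `G ∘ 2K₁`: attach two new pendant vertices to each vertex of `G`. -/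
def corona2K1 {V : Type*} (G : SimpleGraph V) : SimpleGraph (V ⊕ V × Fin 2) :=
  SimpleGraph.fromRel (fun a b => match a, b with
    | Sum.inl x, Sum.inl y => G.Adj x y
    | Sum.inl x, Sum.inr (y, _) => x = y
    | _, _ => False)

/-! A zero forcing set meets every fort, since the first vertex of a fort to be filled would have
been forced by a filled vertex outside the fort with exactly one neighbour in it. Hence a zero
forcing set `S` and a family `𝒞` of pairwise disjoint forts squeeze each of `ft`, `Z*` and `Z`
between `|𝒞|` and `|S|`. In `G' ∘ 2K₁` the pendant pairs are `r` disjoint forts, and one pendant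
per vertex of `G'` is a zero forcing set of size `r`. -/

section Forts

variable {W : Type*} {G : SimpleGraph W}

theorem IsZeroForcingSet.exists_mem_of_isFort {S : Set W} (hS : IsZeroForcingSet G S)
    {F : Finset W} (hF : IsFort G F) : ∃ v ∈ F, v ∈ S := by
  by_contra! hFS
  have not_mem : ∀ v, ZFForced G S v → v ∉ F := by
    intro v hv
    induction hv with
    | init v hvS => exact fun hvF => hFS v hvF hvS
    | force u w hadj _ _ hu_out hnbr_out =>
      refine fun hwF => hF.2 u hu_out ⟨w, ⟨hwF, hadj⟩, fun z ⟨hzF, huz⟩ => ?_⟩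
      by_contra hzw
      exact hnbr_out z huz hzw hzF
  obtain ⟨v, hv⟩ := hF.1
  exact not_mem v (hS v) hv

theorem isZeroForcingSet_univ : IsZeroForcingSet G Set.univ :=
  fun v => .init v trivial

theorem IsZeroForcingSet.card_le {S : Finset W} (hS : IsZeroForcingSet G S)
    {𝒞 : Finset (Finset W)} (h𝒞 : ∀ F ∈ 𝒞, IsFort G F)
    (hdisj : (𝒞 : Set (Finset W)).Pairwise Disjoint) : 𝒞.card ≤ S.card := by
  refine Finset.card_le_card_of_forall_subsingleton (fun F v => v ∈ F)
    (fun F hF => ?_) fun v _ F ⟨hF, hvF⟩ F' ⟨hF', hvF'⟩ => ?_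
  · obtain ⟨v, hvF, hvS⟩ := hS.exists_mem_of_isFort (h𝒞 F hF)
    exact ⟨v, hvS, hvF⟩
  · by_contra hne
    exact Finset.disjoint_left.mp (hdisj hF hF' hne) hvF hvF'

variable [Fintype W]

theorem fracZ_le_card {S : Finset W} (hS : IsZeroForcingSet G S) : fracZ G ≤ S.card := by
  classical
  refine csInf_le ⟨0, ?_⟩ ⟨fun v => if v ∈ S then 1 else 0, fun v => by positivity, ?_, ?_⟩
  · rintro x ⟨ω, hω, -, rfl⟩
    exact Finset.sum_nonneg fun v _ => hω v
  · intro F hF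
    obtain ⟨v, hvF, hvS⟩ := hS.exists_mem_of_isFort hF
    calc (1 : ℝ) = if v ∈ S then 1 else 0 := (if_pos hvS).symm
      _ ≤ ∑ u ∈ F, if u ∈ S then (1 : ℝ) else 0 :=
        Finset.single_le_sum (f := fun u => if u ∈ S then (1 : ℝ) else 0)
          (fun _ _ => by positivity) hvF
  · simp [Finset.sum_ite_mem]

theorem card_le_fracZ {𝒞 : Finset (Finset W)} (h𝒞 : ∀ F ∈ 𝒞, IsFort G F)
    (hdisj : (𝒞 : Set (Finset W)).Pairwise Disjoint) : (𝒞.card : ℝ) ≤ fracZ G := by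
  classical
  -- the constant weight `1` is feasible because forts are nonempty
  refine le_csInf ⟨_, fun _ => 1, fun _ => zero_le_one, fun F hF => ?_, rfl⟩ ?_
  · simpa using hF.1.card_pos
  rintro x ⟨ω, hω, hωF, rfl⟩
  calc (𝒞.card : ℝ) = ∑ _F ∈ 𝒞, (1 : ℝ) := by simp
    _ ≤ ∑ F ∈ 𝒞, ∑ v ∈ F, ω v := Finset.sum_le_sum fun F hF => hωF F (h𝒞 F hF)
    _ = ∑ v ∈ 𝒞.biUnion id, ω v := (Finset.sum_biUnion hdisj).symm
    _ ≤ ∑ v, ω v := Finset.sum_le_univ_sum_of_nonneg hω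

theorem fort_numbers_eq_of_card_eq {S : Finset W} (hS : IsZeroForcingSet G S)
    {𝒞 : Finset (Finset W)} (h𝒞 : ∀ F ∈ 𝒞, IsFort G F)
    (hdisj : (𝒞 : Set (Finset W)).Pairwise Disjoint) (hcard : 𝒞.card = S.card) :
    fortNumber G = S.card ∧ fracZ G = S.card ∧ zfNumber G = S.card := by
  have ft_le : ∀ k ∈ {k | ∃ 𝒞 : Finset (Finset W), (∀ F ∈ 𝒞, IsFort G F) ∧
      (𝒞 : Set (Finset W)).Pairwise Disjoint ∧ 𝒞.card = k}, k ≤ S.card := by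
    rintro k ⟨𝒟, h𝒟, hdisj𝒟, rfl⟩
    exact hS.card_le h𝒟 hdisj𝒟
  have ft_mem : S.card ∈ {k | ∃ 𝒞 : Finset (Finset W), (∀ F ∈ 𝒞, IsFort G F) ∧
      (𝒞 : Set (Finset W)).Pairwise Disjoint ∧ 𝒞.card = k} := ⟨𝒞, h𝒞, hdisj, hcard⟩
  refine ⟨le_antisymm (csSup_le ⟨_, ft_mem⟩ ft_le) (le_csSup ⟨_, ft_le⟩ ft_mem),
    le_antisymm (fracZ_le_card hS) (hcard ▸ card_le_fracZ h𝒞 hdisj),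
    le_antisymm (Nat.sInf_le ⟨S, hS, rfl⟩) ?_⟩
  classical
  refine le_csInf ⟨_, Finset.univ, by simpa using isZeroForcingSet_univ, rfl⟩ ?_
  rintro k ⟨T, hT, rfl⟩
  exact hcard ▸ hT.card_le h𝒞 hdisj

end Forts

section Corona

variable {V : Type*} (G : SimpleGraph V)

@[simp]
theorem corona2K1_adj_inl_inr {x : V} {p : V × Fin 2} :
    (corona2K1 G).Adj (.inl x) (.inr p) ↔ x = p.1 := by
  simp [corona2K1]

@[simp]
theorem corona2K1_adj_inr_inl {p : V × Fin 2} {x : V} :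
    (corona2K1 G).Adj (.inr p) (.inl x) ↔ x = p.1 := by
  rw [SimpleGraph.adj_comm, corona2K1_adj_inl_inr]

@[simp]
theorem corona2K1_not_adj_inr_inr {p q : V × Fin 2} : ¬ (corona2K1 G).Adj (.inr p) (.inr q) := by
  simp [corona2K1]

def pendants (x : V) : Finset (V ⊕ V × Fin 2) :=
  Finset.univ.map ((Function.Embedding.sectR x (Fin 2)).trans .inr)

@[simp]
theorem mem_pendants {x : V} {v : V ⊕ V × Fin 2} : v ∈ pendants x ↔ ∃ i, .inr (x, i) = v := by
  simp [pendants]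

theorem pendants_injective : Function.Injective (pendants (V := V)) := by
  intro x y h
  have hx : Sum.inr (x, 0) ∈ pendants y := h ▸ mem_pendants.mpr ⟨0, rfl⟩
  simp_all

theorem isFort_pendants (x : V) : IsFort (corona2K1 G) (pendants x) := by
  refine ⟨⟨.inr (x, 0), mem_pendants.mpr ⟨0, rfl⟩⟩, ?_⟩
  rintro (y | p) - ⟨_, ⟨hu, hvu⟩, huniq⟩
  · obtain ⟨i, rfl⟩ := mem_pendants.mp hu
    obtain rfl : y = x := by simpa using hvu
    -- `y` sees both of its pendants
    have h0 := huniq (.inr (y, 0)) ⟨mem_pendants.mpr ⟨0, rfl⟩, by simp⟩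
    have h1 := huniq (.inr (y, 1)) ⟨mem_pendants.mpr ⟨1, rfl⟩, by simp⟩
    simp only [Sum.inr.injEq, Prod.mk.injEq, true_and] at h0 h1
    exact zero_ne_one (h0.trans h1.symm)
  · obtain ⟨i, rfl⟩ := mem_pendants.mp hu
    exact corona2K1_not_adj_inr_inr G hvu

def pendantPairs (V : Type*) [Fintype V] : Finset (Finset (V ⊕ V × Fin 2)) :=
  Finset.univ.map ⟨pendants, pendants_injective⟩

theorem card_pendantPairs [Fintype V] : (pendantPairs V).card = Fintype.card V := by
  simp [pendantPairs]

theorem isFort_of_mem_pendantPairs [Fintype V] {F : Finset (V ⊕ V × Fin 2)}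
    (hF : F ∈ pendantPairs V) : IsFort (corona2K1 G) F := by
  obtain ⟨x, -, rfl⟩ := Finset.mem_map.mp hF
  exact isFort_pendants G x

theorem pairwise_disjoint_pendantPairs [Fintype V] :
    (pendantPairs V : Set (Finset (V ⊕ V × Fin 2))).Pairwise Disjoint := by
  simp only [pendantPairs, Finset.coe_map, Finset.coe_univ, Set.image_univ]
  rintro _ ⟨x, rfl⟩ _ ⟨y, rfl⟩ hne
  refine Finset.disjoint_left.mpr fun v hx hy => hne ?_
  obtain ⟨i, rfl⟩ := mem_pendants.mp hx
  obtain ⟨j, hj⟩ := mem_pendants.mp hy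
  simp_all

def firstPendants (V : Type*) [Fintype V] : Finset (V ⊕ V × Fin 2) :=
  Finset.univ.map ((Function.Embedding.sectL V (0 : Fin 2)).trans .inr)

theorem card_firstPendants [Fintype V] : (firstPendants V).card = Fintype.card V := by
  simp [firstPendants]

theorem isZeroForcingSet_firstPendants [Fintype V] :
    IsZeroForcingSet (corona2K1 G) (firstPendants V) := by
  have first : ∀ x, ZFForced (corona2K1 G) (firstPendants V) (.inr (x, 0)) :=
    fun x => .init _ (by simp [firstPendants])
  have base : ∀ x, ZFForced (corona2K1 G) (firstPendants V) (.inl x) := by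
    intro x
    refine .force _ _ (by simp) (first x) ?_
    rintro (y | p) hadj hne
    · simp_all
    · exact absurd hadj (corona2K1_not_adj_inr_inr G)
  -- once every base vertex is filled, `x` has only its second pendant unfilled
  have second : ∀ x, ZFForced (corona2K1 G) (firstPendants V) (.inr (x, 1)) := by
    intro x
    refine .force _ _ (by simp) (base x) ?_
    rintro (y | ⟨y, i⟩) hadj hne
    · exact base y
    · obtain rfl : x = y := by simpa using hadj
      obtain rfl : i = 0 := by fin_cases i <;> simp_all
      exact first x
  rintro (x | ⟨x, i⟩)
  · exact base x
  · fin_cases i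
    · exact first x
    · exact second x

end Corona

theorem corona2K1_numbers_general {V : Type*} [Fintype V] (G' : SimpleGraph V)
    (r : ℕ) (hcard : Fintype.card V = r) :
    fortNumber (corona2K1 G') = r ∧
    fracZ (corona2K1 G') = (r : ℝ) ∧
    zfNumber (corona2K1 G') = r := by
  have hS : (firstPendants V).card = r := card_firstPendants.trans hcard
  rw [← hS]
  exact fort_numbers_eq_of_card_eq (isZeroForcingSet_firstPendants G')
    (fun _ => isFort_of_mem_pendantPairs G') pairwise_disjoint_pendantPairs
    (card_pendantPairs.trans card_firstPendants.symm)

/-- if `G'` has order `r ≥ 2`, then `ft(G' ∘ 2K₁) = Z*(G' ∘ 2K₁) = Z(G' ∘ 2K₁) = r`. -/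
theorem corona2K1_numbers {V : Type*} [Fintype V] [DecidableEq V] (G' : SimpleGraph V)
    (r : ℕ) (hr : 2 ≤ r) (hcard : Fintype.card V = r) :
    fortNumber (corona2K1 G') = r ∧
    fracZ (corona2K1 G') = (r : ℝ) ∧
    zfNumber (corona2K1 G') = r :=
  corona2K1_numbers_general G' r hcard
end

section
/- Let G be a finite simple graph of order n with no isolated vertices. Then ft(G) = n/2 if and only if all of the following hold: (1) n = 2k is even; (2) there is a partition of V(G) into two-element sets F_i = {x_i, y_i} for i = 1,…,k; and (3) for each pair i ≠ j, letting S_{i,j} = {x_i x_j, x_i y_j, y_i x_j, y_i y_j}, either all four pairs in S_{i,j} are edges of G or none of them is an edge of G. -/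
open Finset

section aux
variable {V : Type*} [Fintype V] [DecidableEq V] {G : SimpleGraph V}

omit [Fintype V] in
lemma fort_two_le (hniso : ∀ v : V, ∃ u, G.Adj v u) {F : Finset V}
    (h : IsFort G F) : 2 ≤ F.card := by
  obtain ⟨⟨u, hu⟩, hfort⟩ := h
  obtain ⟨w, hw⟩ := hniso u
  rw [show (2:ℕ) = 1 + 1 from rfl, ← Nat.lt_iff_add_one_le, Finset.one_lt_card]
  by_cases hwF : w ∈ F
  · exact ⟨u, hu, w, hwF, G.ne_of_adj hw⟩
  · have h1 : u ∈ F ∧ G.Adj w u := ⟨hu, hw.symm⟩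
    have h2 : ∃ y, (y ∈ F ∧ G.Adj w y) ∧ y ≠ u := by
      by_contra hcon
      push_neg at hcon
      exact hfort w hwF ⟨u, h1, fun y hy => hcon y hy⟩
    obtain ⟨y, ⟨hyF, _⟩, hyu⟩ := h2
    exact ⟨y, hyF, u, hu, hyu⟩

omit [Fintype V] in
lemma fort_pair {x y v : V} (hxy : x ≠ y)
    (h : IsFort G ({x, y} : Finset V)) (hv : v ∉ ({x, y} : Finset V)) :
    (G.Adj v x ↔ G.Adj v y) := by
  constructor
  · intro hvx
    by_contra hvy
    refine h.2 v hv ⟨x, ⟨by simp, hvx⟩, fun u hu => ?_⟩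
    rcases Finset.mem_insert.mp hu.1 with rfl | h'
    · rfl
    · simp only [Finset.mem_singleton] at h'
      subst h'
      exact absurd hu.2 hvy
  · intro hvy
    by_contra hvx
    refine h.2 v hv ⟨y, ⟨by simp, hvy⟩, fun u hu => ?_⟩
    rcases Finset.mem_insert.mp hu.1 with rfl | h'
    · exact absurd hu.2 hvx
    · simpa using h'

lemma collection_bound {𝒞 : Finset (Finset V)} (hforts : ∀ F ∈ 𝒞, IsFort G F)
    (hdisj : (↑𝒞 : Set (Finset V)).Pairwise Disjoint)
    (hniso : ∀ v : V, ∃ u, G.Adj v u) :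
    2 * 𝒞.card ≤ Fintype.card V := by
  calc 2 * 𝒞.card = ∑ F ∈ 𝒞, 2 := by rw [Finset.sum_const, smul_eq_mul, mul_comm]
  _ ≤ ∑ F ∈ 𝒞, F.card := Finset.sum_le_sum fun F hF => fort_two_le hniso (hforts F hF)
  _ = (𝒞.biUnion id).card := (Finset.card_biUnion fun x hx y hy hxy => hdisj hx hy hxy).symm
  _ ≤ Fintype.card V := Finset.card_le_univ _
end aux

/-- a graph of order `n` with no isolated vertices has `ft(G) = n/2` iff
`n = 2k` is even, the vertices can be partitioned into pairs `F_i = {x_i, y_i}`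
(encoded by an equivalence `e : Fin k × Fin 2 ≃ V` with `x_i = e (i,0)`, `y_i = e (i,1)`),
and for each `i ≠ j` either all four cross pairs are edges or none is. -/
theorem fortNumber_eq_half_order_iff {V : Type*} [Fintype V] [DecidableEq V]
    (G : SimpleGraph V) (hniso : ∀ v : V, ∃ u, G.Adj v u) :
    (fortNumber G : ℝ) = (Fintype.card V : ℝ) / 2 ↔
      ∃ (k : ℕ) (e : Fin k × Fin 2 ≃ V),
        Fintype.card V = 2 * k ∧
        ∀ i j : Fin k, i ≠ j →
          ((∀ a b : Fin 2, G.Adj (e (i, a)) (e (j, b))) ∨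
           (∀ a b : Fin 2, ¬ G.Adj (e (i, a)) (e (j, b)))) := by
  classical
  set n := Fintype.card V with hn
  set S : Set ℕ := {k | ∃ 𝒞 : Finset (Finset V), (∀ F ∈ 𝒞, IsFort G F) ∧
    (↑𝒞 : Set (Finset V)).Pairwise Disjoint ∧ 𝒞.card = k} with hSdef
  have hftS : fortNumber G = sSup S := rfl
  have hS0 : (0:ℕ) ∈ S := ⟨∅, by simp, by simp, by simp⟩
  have hSne : S.Nonempty := ⟨0, hS0⟩
  have hSbdd : BddAbove S := ⟨n, fun m hm => by
    obtain ⟨𝒞, h1, h2, h3⟩ := hm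
    have := collection_bound h1 h2 hniso
    omega⟩
  have ht2 : ∀ c : Fin 2, c = 0 ∨ c = 1 := by decide
  constructor
  · intro h
    have h2n : n = 2 * fortNumber G := by
      have h' : ((2 * fortNumber G : ℕ) : ℝ) = (n : ℝ) := by push_cast; rw [h]; ring
      exact_mod_cast h'.symm
    set k := fortNumber G with hk
    have hkmem : k ∈ S := by rw [hftS]; exact Nat.sSup_mem hSne hSbdd
    obtain ⟨𝒞, hforts, hdisj, h𝒞k⟩ := hkmem
    have hsum_le : ∑ F ∈ 𝒞, F.card ≤ n :=
      ((Finset.card_biUnion fun x hx y hy hxy => hdisj hx hy hxy).symm).le.trans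
        (Finset.card_le_univ _)
    have hcard2 : ∀ F ∈ 𝒞, F.card = 2 := by
      intro F hF
      by_contra hne
      have h2F : 2 ≤ F.card := fort_two_le hniso (hforts F hF)
      have hlt : ∑ _F ∈ 𝒞, 2 < ∑ F ∈ 𝒞, F.card :=
        Finset.sum_lt_sum (fun i hi => fort_two_le hniso (hforts i hi)) ⟨F, hF, by omega⟩
      rw [Finset.sum_const, smul_eq_mul] at hlt
      omega
    let eC : Fin k ≃ {F // F ∈ 𝒞} := (finCongr h𝒞k.symm).trans 𝒞.equivFin.symm
    let g : ∀ F : {F // F ∈ 𝒞}, Fin 2 ≃ {x // x ∈ F.1} :=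
      fun F => (finCongr (hcard2 F.1 F.2).symm).trans F.1.equivFin.symm
    let f : Fin k × Fin 2 → V := fun p => ((g (eC p.1)) p.2 : V)
    have hfmem : ∀ p : Fin k × Fin 2, f p ∈ (eC p.1).1 := fun p => ((g (eC p.1)) p.2).2
    have hfinj : Function.Injective f := by
      rintro ⟨i, a⟩ ⟨j, b⟩ hfe
      have hmi := hfmem (i, a)
      have hmj := hfmem (j, b)
      rw [hfe] at hmi
      have hij : eC i = eC j := by
        by_contra hne
        have hne' : (eC i).1 ≠ (eC j).1 := fun hh => hne (Subtype.ext hh)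
        have hd := hdisj (Finset.mem_coe.mpr (eC i).2) (Finset.mem_coe.mpr (eC j).2) hne'
        exact (Finset.disjoint_left.mp hd hmi) hmj
      have hijk : i = j := eC.injective hij
      subst hijk
      have hab : (g (eC i)) a = (g (eC i)) b := Subtype.ext hfe
      have : a = b := (g (eC i)).injective hab
      rw [this]
    have hcards : Fintype.card (Fin k × Fin 2) = Fintype.card V := by
      simp only [Fintype.card_prod, Fintype.card_fin]
      omega
    have hfbij : Function.Bijective f :=
      (Fintype.bijective_iff_injective_and_card f).mpr ⟨hfinj, hcards⟩
    refine ⟨k, Equiv.ofBijective f hfbij, h2n, ?_⟩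
    have hne01 : ∀ i : Fin k, f (i, 0) ≠ f (i, 1) := by
      intro i hfe
      have := hfinj hfe
      simp at this
    have hpairset : ∀ i : Fin k, (eC i).1 = {f (i, 0), f (i, 1)} := by
      intro i
      have hsub : ({f (i, 0), f (i, 1)} : Finset V) ⊆ (eC i).1 := by
        intro x hx
        rcases Finset.mem_insert.mp hx with rfl | hx'
        · exact hfmem (i, 0)
        · rw [Finset.mem_singleton] at hx'
          subst hx'
          exact hfmem (i, 1)
      have hcc : (eC i).1.card ≤ ({f (i, 0), f (i, 1)} : Finset V).card := by
        rw [hcard2 _ (eC i).2, Finset.card_insert_of_notMem (by simp [hne01 i]),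
          Finset.card_singleton]
      exact (Finset.eq_of_subset_of_card_le hsub hcc).symm
    have hfortpair : ∀ i : Fin k, IsFort G ({f (i, 0), f (i, 1)} : Finset V) := by
      intro i
      rw [← hpairset]
      exact hforts _ (eC i).2
    have hnotmem : ∀ (i j : Fin k) (a : Fin 2), i ≠ j →
        f (j, a) ∉ ({f (i, 0), f (i, 1)} : Finset V) := by
      intro i j a hij hmem
      rcases Finset.mem_insert.mp hmem with hh | hh
      · exact hij (congrArg Prod.fst (hfinj hh)).symm
      · rw [Finset.mem_singleton] at hh
        exact hij (congrArg Prod.fst (hfinj hh)).symm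
    intro i j hij
    by_cases hadj : ∃ a b, G.Adj (f (i, a)) (f (j, b))
    · left
      obtain ⟨a, b, hab⟩ := hadj
      have step1 : ∀ a', G.Adj (f (i, a')) (f (j, b)) := by
        have hiff := fort_pair (hne01 i) (hfortpair i) (hnotmem i j b hij)
        have h0 : G.Adj (f (j, b)) (f (i, a)) := hab.symm
        have hall : G.Adj (f (j, b)) (f (i, 0)) ∧ G.Adj (f (j, b)) (f (i, 1)) := by
          rcases ht2 a with rfl | rfl
          · exact ⟨h0, hiff.mp h0⟩
          · exact ⟨hiff.mpr h0, h0⟩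
        intro a'
        rcases ht2 a' with rfl | rfl
        · exact hall.1.symm
        · exact hall.2.symm
      intro a' b'
      have hb := step1 a'
      have hiff2 := fort_pair (hne01 j) (hfortpair j) (hnotmem j i a' hij.symm)
      have hall2 : G.Adj (f (i, a')) (f (j, 0)) ∧ G.Adj (f (i, a')) (f (j, 1)) := by
        rcases ht2 b with rfl | rfl
        · exact ⟨hb, hiff2.mp hb⟩
        · exact ⟨hiff2.mpr hb, hb⟩
      rcases ht2 b' with rfl | rfl
      · exact hall2.1
      · exact hall2.2
    · right
      push_neg at hadj
      exact hadj
  · rintro ⟨k, e, hcard, hcond⟩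
    have heinj := e.injective
    have hne01 : ∀ i : Fin k, e (i, 0) ≠ e (i, 1) := by
      intro i hh
      have := heinj hh
      simp at this
    set Fi : Fin k → Finset V := fun i => {e (i, 0), e (i, 1)} with hFi
    have hmemFi : ∀ (i : Fin k) (v : V), v ∈ Fi i ↔ v = e (i, 0) ∨ v = e (i, 1) := by
      intro i v
      simp [hFi]
    have hfort : ∀ i, IsFort G (Fi i) := by
      intro i
      refine ⟨⟨e (i, 0), by simp [hFi]⟩, ?_⟩
      rintro v hv ⟨u, ⟨huF, hadj⟩, huniq⟩
      obtain ⟨⟨j, b⟩, rfl⟩ := e.surjective v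
      have hji : j ≠ i := by
        rintro rfl
        rcases ht2 b with rfl | rfl
        · exact hv ((hmemFi j _).mpr (Or.inl rfl))
        · exact hv ((hmemFi j _).mpr (Or.inr rfl))
      rcases hcond j i hji with hall | hnone
      · have h0 : e (i, 0) = u := huniq _ ⟨(hmemFi i _).mpr (Or.inl rfl), hall b 0⟩
        have h1 : e (i, 1) = u := huniq _ ⟨(hmemFi i _).mpr (Or.inr rfl), hall b 1⟩
        exact hne01 i (h0.trans h1.symm)
      · rcases (hmemFi i u).mp huF with rfl | rfl
        · exact hnone b 0 hadj
        · exact hnone b 1 hadj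
    have hFiinj : Function.Injective Fi := by
      intro i j hFij
      have hm : e (i, 0) ∈ Fi j := by
        rw [← hFij]
        exact (hmemFi i _).mpr (Or.inl rfl)
      rcases (hmemFi j _).mp hm with hh | hh
      · exact congrArg Prod.fst (heinj hh)
      · exact congrArg Prod.fst (heinj hh)
    have hdisjF : ∀ i j : Fin k, i ≠ j → Disjoint (Fi i) (Fi j) := by
      intro i j hij
      rw [Finset.disjoint_left]
      intro a hai haj
      rcases (hmemFi i a).mp hai with rfl | rfl <;>
        rcases (hmemFi j _).mp haj with hh | hh <;>
        exact hij (congrArg Prod.fst (heinj hh))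
    have hkS : k ∈ S := by
      refine ⟨Finset.univ.image Fi, ?_, ?_, ?_⟩
      · intro F hF
        obtain ⟨i, _, rfl⟩ := Finset.mem_image.mp hF
        exact hfort i
      · intro F1 h1 F2 h2 hne
        obtain ⟨i, _, rfl⟩ := Finset.mem_image.mp (Finset.mem_coe.mp h1)
        obtain ⟨j, _, rfl⟩ := Finset.mem_image.mp (Finset.mem_coe.mp h2)
        exact hdisjF i j (fun hh => hne (congrArg Fi hh))
      · rw [Finset.card_image_of_injective _ hFiinj, Finset.card_univ, Fintype.card_fin]
    have hge : k ≤ fortNumber G := by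
      rw [hftS]
      exact le_csSup hSbdd hkS
    have hle : fortNumber G ≤ k := by
      rw [hftS]
      refine csSup_le hSne fun m hm => ?_
      obtain ⟨𝒞', h1, h2, h3⟩ := hm
      have := collection_bound h1 h2 hniso
      omega
    have hfk : fortNumber G = k := le_antisymm hle hge
    rw [hfk, hcard]
    push_cast
    ring
end

section
/- Let G and G' be simple graphs. If F is a fort of G and F' is a fort of G', then F × F' is a fort of the Cartesian product G □ G'. Consequently, every zero forcing set of G □ G' intersects F × F' for every fort F of G and every fort F' of G'. -/
open Finset

/-- if `F` is a fort of `G` and `F'` is a fort of `G'` then `F × F'` is a fort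
of `G □ G'`; consequently every zero forcing set of `G □ G'` intersects `F × F'`. -/
theorem fort_boxProd {V V' : Type*} (G : SimpleGraph V) (G' : SimpleGraph V')
    (F : Finset V) (F' : Finset V') (hF : IsFort G F) (hF' : IsFort G' F') :
    IsFort (G □ G') (F ×ˢ F') ∧
    ∀ S : Set (V × V'), IsZeroForcingSet (G □ G') S → ∃ p ∈ S, p ∈ F ×ˢ F' := by
  obtain ⟨hFne, hFfort⟩ := hF
  obtain ⟨hF'ne, hF'fort⟩ := hF'
  have hfort : IsFort (G □ G') (F ×ˢ F') := by
    constructor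
    · obtain ⟨a, ha⟩ := hFne
      obtain ⟨b, hb⟩ := hF'ne
      exact ⟨(a, b), Finset.mem_product.mpr ⟨ha, hb⟩⟩
    · rintro ⟨v, v'⟩ hv ⟨⟨u, u'⟩, ⟨huF, hadj⟩, huniq⟩
      rw [Finset.mem_product] at huF
      rw [SimpleGraph.boxProd_adj] at hadj
      by_cases hvF : v ∈ F
      · have hv'F : v' ∉ F' := fun h => hv (Finset.mem_product.mpr ⟨hvF, h⟩)
        apply hF'fort v' hv'F
        rcases hadj with ⟨_, h2⟩ | ⟨hadj', heq⟩
        · exact absurd ((show v' = u' from h2).symm ▸ huF.2) hv'F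
        · refine ⟨u', ⟨huF.2, hadj'⟩, ?_⟩
          intro w' ⟨hw'F, hw'adj⟩
          have := huniq (v, w') ⟨Finset.mem_product.mpr ⟨hvF, hw'F⟩,
            Or.inr ⟨hw'adj, rfl⟩⟩
          exact (Prod.mk.injEq _ _ _ _ ▸ this).2
      · by_cases hv'F : v' ∈ F'
        · apply hFfort v hvF
          rcases hadj with ⟨hadj', h2⟩ | ⟨_, heq⟩
          · refine ⟨u, ⟨huF.1, hadj'⟩, ?_⟩
            intro w ⟨hwF, hwadj⟩
            have := huniq (w, v') ⟨Finset.mem_product.mpr ⟨hwF, hv'F⟩,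
              Or.inl ⟨hwadj, rfl⟩⟩
            exact (Prod.mk.injEq _ _ _ _ ▸ this).1
          · exact absurd ((show v = u from heq).symm ▸ huF.1) hvF
        · rcases hadj with ⟨_, h2⟩ | ⟨_, heq⟩
          · exact hv'F ((show v' = u' from h2).symm ▸ huF.2)
          · exact hvF ((show v = u from heq).symm ▸ huF.1)
  refine ⟨hfort, ?_⟩
  intro S hS
  by_contra h
  push_neg at h
  have key : ∀ q, ZFForced (G □ G') S q → q ∉ F ×ˢ F' := by
    intro q hq
    induction hq with
    | init v hv => exact h v hv
    | force u w hadj hu hnb ihu ihnb =>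
      intro hw
      exact hfort.2 u ihu ⟨w, ⟨hw, hadj⟩, fun x ⟨hxF, hxadj⟩ => by
        by_contra hne
        exact ihnb x hxadj hne hxF⟩
  obtain ⟨a, ha⟩ := hFne
  obtain ⟨b, hb⟩ := hF'ne
  exact key (a, b) (hS (a, b)) (Finset.mem_product.mpr ⟨ha, hb⟩)
end

section
/- Let G and G' be finite simple graphs, each containing at least one edge. Let τ denote the minimum cardinality of a set B ⊆ V(G) × V(G') such that B ∩ (F × F') ≠ ∅ for every fort F of G and every fort F' of G'. Then Z(G □ G') ≥ τ + 1. -/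
open Finset

/-! ### Auxiliary definitions and lemmas -/

/-- The minimum cardinality of a set meeting `F ×ˢ F'` for all forts `F`, `F'`. -/
noncomputable def tau {V V' : Type*} (G : SimpleGraph V) (G' : SimpleGraph V') : ℕ :=
  sInf {k | ∃ B : Finset (V × V'),
        (∀ (F : Finset V) (F' : Finset V'), IsFort G F → IsFort G' F' →
          ∃ p ∈ B, p ∈ F ×ˢ F') ∧ B.card = k}

/-- The minimum cardinality of a fort transversal of a single graph. -/
noncomputable def tauF {V : Type*} (G : SimpleGraph V) : ℕ :=
  sInf {k | ∃ T : Finset V, (∀ F : Finset V, IsFort G F → ∃ t ∈ T, t ∈ F) ∧ T.card = k}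

section basic
variable {V V' : Type*} {G : SimpleGraph V} {G' : SimpleGraph V'}

lemma tau_set_nonempty [Fintype V] [Fintype V'] (G : SimpleGraph V) (G' : SimpleGraph V') :
    {k | ∃ B : Finset (V × V'),
        (∀ (F : Finset V) (F' : Finset V'), IsFort G F → IsFort G' F' →
          ∃ p ∈ B, p ∈ F ×ˢ F') ∧ B.card = k}.Nonempty := by
  refine ⟨_, Finset.univ, fun F F' hF hF' => ?_, rfl⟩
  obtain ⟨a, ha⟩ := hF.1
  obtain ⟨b, hb⟩ := hF'.1
  exact ⟨(a, b), mem_univ _, mem_product.2 ⟨ha, hb⟩⟩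

lemma tau_le_card {B : Finset (V × V')}
    (hB : ∀ (F : Finset V) (F' : Finset V'), IsFort G F → IsFort G' F' →
      ∃ p ∈ B, p ∈ F ×ˢ F') : tau G G' ≤ B.card :=
  Nat.sInf_le ⟨B, hB, rfl⟩

lemma tauF_set_nonempty [Fintype V] (G : SimpleGraph V) :
    {k | ∃ T : Finset V, (∀ F : Finset V, IsFort G F → ∃ t ∈ T, t ∈ F) ∧ T.card = k}.Nonempty :=
  ⟨_, Finset.univ, fun F hF => by obtain ⟨a, ha⟩ := hF.1; exact ⟨a, mem_univ _, ha⟩, rfl⟩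

lemma tauF_le_card {T : Finset V} (hT : ∀ F : Finset V, IsFort G F → ∃ t ∈ T, t ∈ F) :
    tauF G ≤ T.card :=
  Nat.sInf_le ⟨T, hT, rfl⟩

lemma isFort_boxProd {F : Finset V} {F' : Finset V'}
    (hF : IsFort G F) (hF' : IsFort G' F') : IsFort (G □ G') (F ×ˢ F') := by
  refine ⟨?_, ?_⟩
  · obtain ⟨a, ha⟩ := hF.1; obtain ⟨b, hb⟩ := hF'.1
    exact ⟨(a, b), mem_product.2 ⟨ha, hb⟩⟩
  rintro ⟨a, b⟩ hab ⟨⟨c, d⟩, ⟨hcd, hadj⟩, huniq⟩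
  rw [mem_product] at hcd
  rw [mem_product] at hab
  rcases SimpleGraph.boxProd_adj.1 hadj with ⟨hGac, hbd⟩ | ⟨hGbd, hac⟩
  · simp only at hGac hbd
    subst hbd
    have haF : a ∉ F := fun h => hab ⟨h, hcd.2⟩
    refine hF.2 a haF ⟨c, ⟨hcd.1, hGac⟩, fun y ⟨hyF, hya⟩ => ?_⟩
    have := huniq (y, b) ⟨mem_product.2 ⟨hyF, hcd.2⟩, SimpleGraph.boxProd_adj.2 (Or.inl ⟨hya, rfl⟩)⟩
    exact congrArg Prod.fst this
  · simp only at hGbd hac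
    subst hac
    have hbF : b ∉ F' := fun h => hab ⟨hcd.1, h⟩
    refine hF'.2 b hbF ⟨d, ⟨hcd.2, hGbd⟩, fun y ⟨hyF, hya⟩ => ?_⟩
    have := huniq (a, y) ⟨mem_product.2 ⟨hcd.1, hyF⟩, SimpleGraph.boxProd_adj.2 (Or.inr ⟨hya, rfl⟩)⟩
    exact congrArg Prod.snd this

lemma zfforced_notMem_fort {S : Set V} {Φ : Finset V} (hΦ : IsFort G Φ)
    (hdisj : ∀ s ∈ Φ, s ∉ S) {v : V} (hv : ZFForced G S v) : v ∉ Φ := by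
  induction hv with
  | init v h => exact fun hm => hdisj v hm h
  | force p q hadj hp hside ihp ihside =>
    intro hqΦ
    refine hΦ.2 p ihp ⟨q, ⟨hqΦ, hadj⟩, fun y ⟨hyΦ, hyadj⟩ => ?_⟩
    by_contra hyq
    exact (ihside y hyadj hyq) hyΦ

lemma zfs_hits_fort {S : Set V} (hS : IsZeroForcingSet G S) {Φ : Finset V}
    (hΦ : IsFort G Φ) : ∃ s ∈ Φ, s ∈ S := by
  by_contra h
  push_neg at h
  obtain ⟨a, ha⟩ := hΦ.1
  exact zfforced_notMem_fort hΦ h (hS a) ha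

lemma exists_first_force {S : Set V} {v : V} (hv : ZFForced G S v) (hvS : v ∉ S) :
    ∃ p q, p ∈ S ∧ q ∉ S ∧ G.Adj p q ∧ ∀ x, G.Adj p x → x ≠ q → x ∈ S := by
  by_contra h
  push_neg at h
  suffices h' : ∀ u, ZFForced G S u → u ∈ S from hvS (h' v hv)
  intro u hu
  induction hu with
  | init v h => exact h
  | force p q hadj hp hside ihp ihside =>
    by_contra hq
    obtain ⟨x, hx1, hx2, hx3⟩ := h p q ihp hq hadj
    exact hx3 (ihside x hx1 hx2)

end basic

section transfer
variable {α β : Type*} {G : SimpleGraph α} {H : SimpleGraph β}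

lemma zfforced_map (e : α ≃ β) (he : ∀ a b, G.Adj a b ↔ H.Adj (e a) (e b))
    {S : Set α} {v : α} (hv : ZFForced G S v) : ZFForced H (e '' S) (e v) := by
  induction hv with
  | init v h => exact .init _ ⟨v, h, rfl⟩
  | force p q hadj hp hside ihp ihside =>
    refine .force (e p) (e q) ((he _ _).1 hadj) ihp ?_
    intro y hy hne
    have h1 : G.Adj p (e.symm y) := (he _ _).2 (by simpa using hy)
    have h2 : e.symm y ≠ q := fun h => hne (by rw [← h, e.apply_symm_apply])
    simpa using ihside _ h1 h2

lemma zfs_map (e : α ≃ β) (he : ∀ a b, G.Adj a b ↔ H.Adj (e a) (e b))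
    {S : Set α} (hS : ∀ v, ZFForced G S v) : ∀ v, ZFForced H (e '' S) v := fun v => by
  simpa using zfforced_map e he (hS (e.symm v))

lemma isFort_map (e : α ≃ β) (he : ∀ a b, G.Adj a b ↔ H.Adj (e a) (e b))
    {F : Finset α} (hF : IsFort G F) : IsFort H (F.map e.toEmbedding) := by
  obtain ⟨a0, ha0⟩ := hF.1
  refine ⟨⟨e a0, mem_map.2 ⟨a0, ha0, rfl⟩⟩, ?_⟩
  intro v hv ⟨u, ⟨huF, hua⟩, huniq⟩
  obtain ⟨x, hxF, hx⟩ := mem_map.1 huF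
  have hv' : e.symm v ∉ F := fun h => hv (mem_map.2 ⟨_, h, by simp⟩)
  refine hF.2 (e.symm v) hv' ⟨x, ⟨hxF, (he _ _).2 (by rw [e.apply_symm_apply]; exact hx.symm ▸ hua)⟩, ?_⟩
  intro y ⟨hyF, hya⟩
  have h1 : e y = u := huniq (e y) ⟨mem_map.2 ⟨y, hyF, rfl⟩, by
    have := (he (e.symm v) y).1 hya; simpa using this⟩
  have h2 : e y = e x := by rw [h1, ← hx]; rfl
  exact e.injective h2

end transfer

section tautransfer
variable {V V' : Type*}

lemma tau_swap_le [Fintype V] [Fintype V'] (G : SimpleGraph V) (G' : SimpleGraph V') :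
    tau G' G ≤ tau G G' := by
  obtain ⟨B, hB, hBc⟩ := Nat.sInf_mem (tau_set_nonempty G G')
  have htrans : ∀ (F' : Finset V') (F : Finset V), IsFort G' F' → IsFort G F →
      ∃ p ∈ B.map (Equiv.prodComm V V').toEmbedding, p ∈ F' ×ˢ F := by
    intro F' F hF' hF
    obtain ⟨p, hpB, hp⟩ := hB F F' hF hF'
    rw [mem_product] at hp
    exact ⟨(p.2, p.1), mem_map.2 ⟨p, hpB, rfl⟩, mem_product.2 ⟨hp.2, hp.1⟩⟩
  calc tau G' G ≤ (B.map (Equiv.prodComm V V').toEmbedding).card := tau_le_card htrans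
  _ = tau G G' := by rw [card_map, hBc]; rfl

lemma tau_le_equiv {W W' : Type*} [Fintype W] [Fintype W'] (e : V ≃ W) (e' : V' ≃ W')
    (G : SimpleGraph V) (H : SimpleGraph W) (G' : SimpleGraph V') (H' : SimpleGraph W')
    (he : ∀ a b, G.Adj a b ↔ H.Adj (e a) (e b))
    (he' : ∀ a b, G'.Adj a b ↔ H'.Adj (e' a) (e' b)) :
    tau G G' ≤ tau H H' := by
  obtain ⟨B, hB, hBc⟩ := Nat.sInf_mem (tau_set_nonempty H H')
  have htrans : ∀ (F : Finset V) (F' : Finset V'), IsFort G F → IsFort G' F' →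
      ∃ p ∈ B.map ((Equiv.prodCongr e e').symm.toEmbedding), p ∈ F ×ˢ F' := by
    intro F F' hF hF'
    obtain ⟨p, hpB, hp⟩ := hB (F.map e.toEmbedding) (F'.map e'.toEmbedding)
      (isFort_map e he hF) (isFort_map e' he' hF')
    rw [mem_product] at hp
    obtain ⟨x, hxF, hx⟩ := mem_map.1 hp.1
    obtain ⟨y, hyF, hy⟩ := mem_map.1 hp.2
    refine ⟨(e.symm p.1, e'.symm p.2), mem_map.2 ⟨p, hpB, rfl⟩, mem_product.2 ⟨?_, ?_⟩⟩
    · rw [← hx]; simpa using hxF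
    · rw [← hy]; simpa using hyF
  calc tau G G' ≤ (B.map ((Equiv.prodCongr e e').symm.toEmbedding)).card := tau_le_card htrans
  _ = tau H H' := by rw [card_map, hBc]; rfl

end tautransfer

section red
universe w
variable {V V' : Type w}

lemma red [Fintype V] [Fintype V'] [DecidableEq V] [DecidableEq V']
    (G : SimpleGraph V) (G' : SimpleGraph V') (u' : V') (hiso : ∀ y, ¬ G'.Adj u' y)
    (S : Finset (V × V')) (hS : IsZeroForcingSet (G □ G') ↑S)
    (hrec : ∀ S₁ : Finset (V × {y : V' // y ≠ u'}),
        IsZeroForcingSet (G □ G'.comap (Subtype.val : {y : V' // y ≠ u'} → V')) ↑S₁ →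
        tau G (G'.comap (Subtype.val : {y : V' // y ≠ u'} → V')) + 1 ≤ S₁.card) :
    tau G G' + 1 ≤ S.card := by
  set G'' := G'.comap (Subtype.val : {y : V' // y ≠ u'} → V') with hG''
  set S₀ : Finset V := univ.filter (fun z => (z, u') ∈ S) with hS₀def
  set S₁ : Finset (V × {y : V' // y ≠ u'}) := univ.filter (fun q => (q.1, q.2.1) ∈ S)
    with hS₁def
  have hadj'' : ∀ (a b : V × {y : V' // y ≠ u'}),
      (G □ G'').Adj a b ↔ (G □ G').Adj (a.1, a.2.1) (b.1, b.2.1) := by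
    intro a b
    simp [SimpleGraph.boxProd_adj, hG'', Subtype.ext_iff]
  have hforcer2 : ∀ (p q : V × V'), (G □ G').Adj p q → q.2 ≠ u' → p.2 ≠ u' := by
    rintro p q (⟨h, h2⟩ | ⟨h, h2⟩) hq
    · rw [h2]; exact hq
    · intro hp; rw [hp] at h; exact hiso _ h
  have key : ∀ v, ZFForced (G □ G') ↑S v → ∀ h : v.2 ≠ u',
      ZFForced (G □ G'') ↑S₁ (v.1, ⟨v.2, h⟩) := by
    intro v hv
    induction hv with
    | init v hvS =>
      intro h
      refine .init _ ?_
      rw [Finset.mem_coe, hS₁def, mem_filter]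
      exact ⟨mem_univ _, hvS⟩
    | force p q hadj hp hside ihp ihside =>
      intro hq2
      have hp2 : p.2 ≠ u' := hforcer2 p q hadj hq2
      refine .force (p.1, ⟨p.2, hp2⟩) (q.1, ⟨q.2, hq2⟩) ((hadj'' _ _).2 hadj) (ihp hp2) ?_
      rintro ⟨x1, x2⟩ hx hne
      have hxadj : (G □ G').Adj p (x1, x2.1) := (hadj'' _ _).1 hx
      have hxne : (x1, x2.1) ≠ q := by
        intro h
        apply hne
        have h1 : x1 = q.1 := congrArg Prod.fst h
        have h2 : x2.1 = q.2 := congrArg Prod.snd h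
        subst h1
        exact Prod.ext rfl (Subtype.ext h2)
      exact ihside _ hxadj hxne x2.2
  have hZF₁ : IsZeroForcingSet (G □ G'') ↑S₁ := by
    rintro ⟨z, c⟩
    exact key (z, c.1) (hS (z, c.1)) c.2
  have h1 : tau G G'' + 1 ≤ S₁.card := hrec S₁ hZF₁
  have fortu' : IsFort G' {u'} := by
    refine ⟨⟨u', mem_singleton_self u'⟩, ?_⟩
    rintro v hv ⟨x, ⟨hxF, hxadj⟩, -⟩
    rw [mem_singleton] at hxF
    subst hxF
    exact hiso v hxadj.symm
  have h0 : ∀ F : Finset V, IsFort G F → ∃ z ∈ S₀, z ∈ F := by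
    intro F hF
    obtain ⟨s, hs1, hs2⟩ := zfs_hits_fort hS (isFort_boxProd hF fortu')
    rw [mem_product] at hs1
    have hsu : s.2 = u' := mem_singleton.1 hs1.2
    refine ⟨s.1, ?_, hs1.1⟩
    rw [hS₀def, mem_filter]
    refine ⟨mem_univ _, ?_⟩
    rw [← hsu]
    exact Finset.mem_coe.1 hs2
  have h2 : tauF G ≤ S₀.card := tauF_le_card h0
  have h3 : tau G G' ≤ tauF G + tau G G'' := by
    obtain ⟨T, hT, hTc⟩ := Nat.sInf_mem (tauF_set_nonempty G)
    obtain ⟨B'', hB'', hB''c⟩ := Nat.sInf_mem (tau_set_nonempty G G'')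
    have hBtrans : ∀ (F : Finset V) (F' : Finset V'), IsFort G F → IsFort G' F' →
        ∃ p ∈ T ×ˢ {u'} ∪ B''.image (fun q => (q.1, q.2.1)), p ∈ F ×ˢ F' := by
      intro F F' hF hF'
      by_cases hone : F' = {u'}
      · obtain ⟨t, htT, htF⟩ := hT F hF
        exact ⟨(t, u'), mem_union_left _ (mem_product.2 ⟨htT, mem_singleton_self _⟩),
          mem_product.2 ⟨htF, by rw [hone]; exact mem_singleton_self _⟩⟩
      · set F'' : Finset {y : V' // y ≠ u'} := F'.subtype (fun y => y ≠ u') with hF''def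
        have hmemF'' : ∀ (y : {y : V' // y ≠ u'}), y ∈ F'' ↔ y.1 ∈ F' := by
          intro y
          rw [hF''def, Finset.mem_subtype]
        have hne'' : F''.Nonempty := by
          have hex : ∃ y ∈ F', y ≠ u' := by
            by_contra hc
            push_neg at hc
            exact hone (Finset.eq_singleton_iff_nonempty_unique_mem.2 ⟨hF'.1, hc⟩)
          obtain ⟨y, hy1, hy2⟩ := hex
          exact ⟨⟨y, hy2⟩, (hmemF'' _).2 hy1⟩
        have hfort'' : IsFort G'' F'' := by
          refine ⟨hne'', ?_⟩
          rintro v hv ⟨x, ⟨hxF, hxadj⟩, huniq⟩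
          have hvF' : v.1 ∉ F' := fun h => hv ((hmemF'' _).2 h)
          refine hF'.2 v.1 hvF' ⟨x.1, ⟨(hmemF'' _).1 hxF, hxadj⟩, ?_⟩
          intro z ⟨hzF, hza⟩
          have hzu : z ≠ u' := by
            intro h; subst h; exact hiso v.1 hza.symm
          have hzx : (⟨z, hzu⟩ : {y : V' // y ≠ u'}) = x :=
            huniq ⟨z, hzu⟩ ⟨(hmemF'' _).2 hzF, hza⟩
          exact congrArg Subtype.val hzx
        obtain ⟨p'', hp''B, hp''⟩ := hB'' F F'' hF hfort''
        rw [mem_product] at hp''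
        exact ⟨(p''.1, p''.2.1), mem_union_right _ (mem_image.2 ⟨p'', hp''B, rfl⟩),
          mem_product.2 ⟨hp''.1, (hmemF'' _).1 hp''.2⟩⟩
    have e1 : (T ×ˢ ({u'} : Finset V')).card = T.card := by
      rw [card_product, card_singleton, mul_one]
    have e2 : (B''.image (fun q => (q.1, q.2.1))).card ≤ B''.card := card_image_le
    have e3 := card_union_le (T ×ˢ ({u'} : Finset V')) (B''.image (fun q => (q.1, q.2.1)))
    have e4 := tau_le_card hBtrans
    have e5 : B''.card = tau G G'' := hB''c
    have e6 : T.card = tauF G := hTc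
    omega
  have h4 : S₀.card + S₁.card ≤ S.card := by
    have e0 : S₀.card = (S.filter (fun p => p.2 = u')).card := by
      refine card_bij' (fun z _ => (z, u')) (fun p _ => p.1) ?_ ?_ ?_ ?_
      · intro a ha
        rw [hS₀def, mem_filter] at ha
        exact mem_filter.2 ⟨ha.2, rfl⟩
      · intro p hp
        rw [mem_filter] at hp
        rw [hS₀def, mem_filter]
        refine ⟨mem_univ _, ?_⟩
        have : (p.1, u') = p := Prod.ext rfl hp.2.symm
        rw [this]
        exact hp.1
      · intro a ha; rfl
      · intro p hp
        rw [mem_filter] at hp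
        exact Prod.ext rfl hp.2.symm
    have e1 : S₁.card = (S.filter (fun p => ¬ p.2 = u')).card := by
      refine card_bij' (fun q _ => (q.1, q.2.1)) (fun p hp => (p.1, ⟨p.2, (mem_filter.1 hp).2⟩))
        ?_ ?_ ?_ ?_
      · intro a ha
        rw [hS₁def, mem_filter] at ha
        exact mem_filter.2 ⟨ha.2, a.2.2⟩
      · intro p hp
        rw [hS₁def, mem_filter]
        refine ⟨mem_univ _, ?_⟩
        have : (p.1, p.2) = p := rfl
        rw [this]
        exact (mem_filter.1 hp).1
      · intro a ha; rfl
      · intro p hp; rfl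
    have e2 := card_filter_add_card_filter_not (s := S) (p := fun p => p.2 = u')
    omega
  omega

end red

section caseA
universe w
variable {V V' : Type w}

lemma caseA [Fintype V] [Fintype V'] [DecidableEq V] [DecidableEq V']
    (G : SimpleGraph V) (G' : SimpleGraph V') (S : Finset (V × V'))
    (hS : IsZeroForcingSet (G □ G') ↑S) (hmin : S.card ≤ tau G G')
    (u w : V) (u' : V') (hpS : (u, u') ∈ S) (hqS : (w, u') ∉ S) (huw : G.Adj u w)
    (hside : ∀ x, (G □ G').Adj (u, u') x → x ≠ (w, u') → x ∈ (↑S : Set (V × V')))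
    (hrec : (∀ y, ¬ G'.Adj u' y) →
      ∀ S₁ : Finset (V × {y : V' // y ≠ u'}),
        IsZeroForcingSet (G □ G'.comap (Subtype.val : {y : V' // y ≠ u'} → V')) ↑S₁ →
        tau G (G'.comap (Subtype.val : {y : V' // y ≠ u'} → V')) + 1 ≤ S₁.card) :
    tau G G' + 1 ≤ S.card := by
  have htrans : ∀ (F : Finset V) (F' : Finset V'), IsFort G F → IsFort G' F' →
      ∃ p ∈ S, p ∈ F ×ˢ F' := by
    intro F F' hF hF'
    obtain ⟨s, hs1, hs2⟩ := zfs_hits_fort hS (isFort_boxProd hF hF')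
    exact ⟨s, Finset.mem_coe.1 hs2, hs1⟩
  have htau : tau G G' ≤ S.card := tau_le_card htrans
  have hcrit : ∀ s ∈ S, ∃ (F : Finset V) (F' : Finset V'), IsFort G F ∧ IsFort G' F' ∧
      s ∈ F ×ˢ F' ∧ ∀ x ∈ S, x ∈ F ×ˢ F' → x = s := by
    intro s hsS
    have hne : ¬ (∀ (F : Finset V) (F' : Finset V'), IsFort G F → IsFort G' F' →
        ∃ p ∈ S.erase s, p ∈ F ×ˢ F') := by
      intro h
      have h1 := tau_le_card h
      have h2 : (S.erase s).card = S.card - 1 := card_erase_of_mem hsS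
      have h3 : 1 ≤ S.card := card_pos.2 ⟨s, hsS⟩
      omega
    push_neg at hne
    obtain ⟨F, F', hF, hF', hmiss⟩ := hne
    obtain ⟨p0, hp0S, hp0⟩ := htrans F F' hF hF'
    have hp0s : p0 = s := by
      by_contra hne'
      exact hmiss p0 (mem_erase.2 ⟨hne', hp0S⟩) hp0
    subst hp0s
    refine ⟨F, F', hF, hF', hp0, fun x hxS hx => ?_⟩
    by_contra hne'
    exact hmiss x (mem_erase.2 ⟨hne', hxS⟩) hx
  have hiso : ∀ y, ¬ G'.Adj u' y := by
    intro y' hy'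
    have hsadj : (G □ G').Adj (u, u') (u, y') := Or.inr ⟨hy', rfl⟩
    have hsne : (u, y') ≠ (w, u') := fun h => (G.ne_of_adj huw) (congrArg Prod.fst h)
    have hsS : (u, y') ∈ S := Finset.mem_coe.1 (hside _ hsadj hsne)
    obtain ⟨F, F', hF, hF', hmem, huniqS⟩ := hcrit _ hsS
    rw [mem_product] at hmem
    have hu'F' : u' ∉ F' := by
      intro h
      have heq : (u, u') = (u, y') := huniqS _ hpS (mem_product.2 ⟨hmem.1, h⟩)
      have : u' = y' := congrArg Prod.snd heq
      rw [this] at hy'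
      exact G'.irrefl hy'
    have hnotu := hF'.2 u' hu'F'
    have h2 : ∃ y₂, (y₂ ∈ F' ∧ G'.Adj u' y₂) ∧ y₂ ≠ y' := by
      by_contra hc
      push_neg at hc
      exact hnotu ⟨y', ⟨hmem.2, hy'⟩, fun z hz => hc z hz⟩
    obtain ⟨y₂, ⟨hy₂F, hy₂a⟩, hy₂ne⟩ := h2
    have hs2adj : (G □ G').Adj (u, u') (u, y₂) := Or.inr ⟨hy₂a, rfl⟩
    have hs2ne : (u, y₂) ≠ (w, u') := fun h => (G.ne_of_adj huw) (congrArg Prod.fst h)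
    have hs2S : (u, y₂) ∈ S := Finset.mem_coe.1 (hside _ hs2adj hs2ne)
    have heq2 : (u, y₂) = (u, y') := huniqS _ hs2S (mem_product.2 ⟨hmem.1, hy₂F⟩)
    exact hy₂ne (congrArg Prod.snd heq2)
  exact red G G' u' hiso S hS (hrec hiso)

end caseA

section main
universe w

lemma main_aux : ∀ (n : ℕ) {V V' : Type w} [Fintype V] [Fintype V'] [DecidableEq V]
    [DecidableEq V'] (G : SimpleGraph V) (G' : SimpleGraph V'),
    Fintype.card V + Fintype.card V' ≤ n →
    (∃ a b, G.Adj a b) → (∃ a b, G'.Adj a b) →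
    ∀ S : Finset (V × V'), IsZeroForcingSet (G □ G') ↑S → tau G G' + 1 ≤ S.card := by
  intro n
  induction n with
  | zero =>
    intro V V' _ _ _ _ G G' hn hE hE' S hS
    obtain ⟨a, b, hab⟩ := hE
    have : 0 < Fintype.card V := Fintype.card_pos_iff.2 ⟨a⟩
    omega
  | succ n ih =>
    intro V V' _ _ _ _ G G' hn hE hE' S hS
    by_cases hbig : tau G G' + 1 ≤ S.card
    · exact hbig
    push_neg at hbig
    have hmin : S.card ≤ tau G G' := Nat.lt_succ_iff.1 hbig
    have hVpos : 0 < Fintype.card V := by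
      obtain ⟨a, b, hab⟩ := hE; exact Fintype.card_pos_iff.2 ⟨a⟩
    have hV'pos : 0 < Fintype.card V' := by
      obtain ⟨a, b, hab⟩ := hE'; exact Fintype.card_pos_iff.2 ⟨a⟩
    -- there is an unfilled vertex
    have hne : ∃ v : V × V', v ∉ S := by
      by_contra hc
      push_neg at hc
      obtain ⟨a, c, hac⟩ := hE
      obtain ⟨b, d, hbd⟩ := hE'
      have hBtrans : ∀ (F : Finset V) (F' : Finset V'), IsFort G F → IsFort G' F' →
          ∃ p ∈ (univ : Finset (V × V')).erase (a, b), p ∈ F ×ˢ F' := by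
        intro F F' hF hF'
        by_cases hsub : ∃ p ∈ F ×ˢ F', p ≠ (a, b)
        · obtain ⟨p, hp1, hp2⟩ := hsub
          exact ⟨p, mem_erase.2 ⟨hp2, mem_univ _⟩, hp1⟩
        · push_neg at hsub
          exfalso
          obtain ⟨x, hx⟩ := hF.1
          obtain ⟨y, hy⟩ := hF'.1
          have hxy := hsub (x, y) (mem_product.2 ⟨hx, hy⟩)
          have haF : a ∈ F := by
            have : x = a := congrArg Prod.fst hxy
            rwa [this] at hx
          have hbF' : b ∈ F' := by
            have : y = b := congrArg Prod.snd hxy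
            rwa [this] at hy
          have hcF : c ∉ F := by
            intro h
            have := hsub (c, b) (mem_product.2 ⟨h, hbF'⟩)
            exact (G.ne_of_adj hac) (congrArg Prod.fst this).symm
          refine hF.2 c hcF ⟨a, ⟨haF, hac.symm⟩, ?_⟩
          intro z ⟨hzF, _⟩
          exact congrArg Prod.fst (hsub (z, b) (mem_product.2 ⟨hzF, hbF'⟩))
      have h1 := tau_le_card hBtrans
      have h2 : ((univ : Finset (V × V')).erase (a, b)).card =
          (univ : Finset (V × V')).card - 1 := card_erase_of_mem (mem_univ _)
      have h3 : S = univ := Finset.eq_univ_iff_forall.2 hc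
      have h4 : 0 < (univ : Finset (V × V')).card := card_pos.2 ⟨(a, b), mem_univ _⟩
      rw [h3] at hmin
      omega
    obtain ⟨v0, hv0⟩ := hne
    obtain ⟨p, q, hpS, hqS, hpq, hside⟩ :=
      exists_first_force (hS v0) (fun h => hv0 (Finset.mem_coe.1 h))
    obtain ⟨p1, p2⟩ := p
    obtain ⟨q1, q2⟩ := q
    rcases SimpleGraph.boxProd_adj.1 hpq with ⟨hG1, he2⟩ | ⟨hG2, he1⟩
    · -- G-direction force
      simp only at hG1 he2
      subst he2
      refine caseA G G' S hS hmin p1 q1 p2 (Finset.mem_coe.1 hpS)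
        (fun h => hqS (Finset.mem_coe.2 h)) hG1 hside ?_
      intro hiso S₁ hS₁
      have hcardsub : Fintype.card {y : V' // y ≠ p2} = Fintype.card V' - 1 := by
        rw [Fintype.card_subtype_compl, Fintype.card_subtype_eq]
      refine ih G (G'.comap (Subtype.val : {y : V' // y ≠ p2} → V')) ?_ hE ?_ S₁ hS₁
      · omega
      · obtain ⟨a, b, hab⟩ := hE'
        have ha : a ≠ p2 := fun h => hiso b (h ▸ hab)
        have hb : b ≠ p2 := fun h => hiso a (h ▸ hab.symm)
        exact ⟨⟨a, ha⟩, ⟨b, hb⟩, hab⟩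
    · -- G'-direction force: swap factors
      simp only at hG2 he1
      subst he1
      have hadjsw : ∀ a b : V × V', (G □ G').Adj a b ↔
          (G' □ G).Adj (Equiv.prodComm V V' a) (Equiv.prodComm V V' b) := by
        intro a b
        simp only [SimpleGraph.boxProd_adj, Equiv.prodComm_apply, Prod.fst_swap, Prod.snd_swap]
        tauto
      set Sw : Finset (V' × V) := S.map (Equiv.prodComm V V').toEmbedding with hSwdef
      have hcoe : (↑Sw : Set (V' × V)) = ⇑(Equiv.prodComm V V') '' ↑S := by
        rw [hSwdef, coe_map]
        rfl
      have hSwZF : IsZeroForcingSet (G' □ G) ↑Sw := by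
        intro v
        rw [hcoe]
        exact zfs_map (Equiv.prodComm V V') hadjsw hS v
      have hSwcard : Sw.card = S.card := card_map _
      have hswap := tau_swap_le G' G
      have hstep : tau G' G + 1 ≤ Sw.card := by
        refine caseA G' G Sw hSwZF ?_ p2 q2 p1 ?_ ?_ hG2 ?_ ?_
        · rw [hSwcard]; exact le_trans hmin hswap
        · exact mem_map.2 ⟨(p1, p2), Finset.mem_coe.1 hpS, rfl⟩
        · intro h
          obtain ⟨x, hxS, hx⟩ := mem_map.1 h
          have hx1 : x.1 = p1 := congrArg Prod.snd hx
          have hx2 : x.2 = q2 := congrArg Prod.fst hx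
          have : x = (p1, q2) := Prod.ext hx1 hx2
          rw [this] at hxS
          exact hqS (Finset.mem_coe.2 hxS)
        · intro x hx hne2
          have h1 : (G □ G').Adj (p1, p2) (x.2, x.1) := (hadjsw (p1, p2) (x.2, x.1)).2 hx
          have h2 : (x.2, x.1) ≠ (p1, q2) := by
            intro h
            apply hne2
            have e1 : x.2 = p1 := congrArg Prod.fst h
            have e2 : x.1 = q2 := congrArg Prod.snd h
            exact Prod.ext e2 e1
          have h3 := hside _ h1 h2
          rw [hcoe]
          exact ⟨(x.2, x.1), h3, rfl⟩
        · intro hiso S₁ hS₁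
          have hcardsub : Fintype.card {y : V // y ≠ p1} = Fintype.card V - 1 := by
            rw [Fintype.card_subtype_compl, Fintype.card_subtype_eq]
          refine ih G' (G.comap (Subtype.val : {y : V // y ≠ p1} → V)) ?_ hE' ?_ S₁ hS₁
          · omega
          · obtain ⟨a, b, hab⟩ := hE
            have ha : a ≠ p1 := fun h => hiso b (h ▸ hab)
            have hb : b ≠ p1 := fun h => hiso a (h ▸ hab.symm)
            exact ⟨⟨a, ha⟩, ⟨b, hb⟩, hab⟩
      rw [hSwcard] at hstep
      exact le_trans (Nat.add_le_add_right hswap 1) hstep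

end main

section final
universe u1 u2

theorem final_aux {V : Type u1} {V' : Type u2} [Fintype V] [Fintype V']
    (G : SimpleGraph V) (G' : SimpleGraph V')
    (hG : ∃ u v, G.Adj u v) (hG' : ∃ u v, G'.Adj u v) :
    sInf {k | ∃ B : Finset (V × V'),
        (∀ (F : Finset V) (F' : Finset V'), IsFort G F → IsFort G' F' →
          ∃ p ∈ B, p ∈ F ×ˢ F') ∧ B.card = k} + 1 ≤ zfNumber (G □ G') := by
  classical
  have hzne : {k | ∃ S : Finset (V × V'), IsZeroForcingSet (G □ G') ↑S ∧ S.card = k}.Nonempty :=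
    ⟨_, univ, fun v => .init v (by simp), rfl⟩
  obtain ⟨S, hSzf, hScard⟩ := Nat.sInf_mem hzne
  show tau G G' + 1 ≤ zfNumber (G □ G')
  have hzeq : zfNumber (G □ G') = S.card := hScard.symm
  rw [hzeq]
  set Gl : SimpleGraph (ULift.{u2} V) := G.comap ULift.down with hGl
  set Gl' : SimpleGraph (ULift.{u1} V') := G'.comap ULift.down with hGl'
  have heV : ∀ a b : V, G.Adj a b ↔ Gl.Adj (Equiv.ulift.symm a) (Equiv.ulift.symm b) :=
    fun a b => Iff.rfl
  have heV' : ∀ a b : V', G'.Adj a b ↔ Gl'.Adj (Equiv.ulift.symm a) (Equiv.ulift.symm b) :=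
    fun a b => Iff.rfl
  have hee : ∀ a b : V × V', (G □ G').Adj a b ↔
      (Gl □ Gl').Adj ((Equiv.ulift.symm.prodCongr Equiv.ulift.symm) a)
        ((Equiv.ulift.symm.prodCongr Equiv.ulift.symm) b) := by
    intro a b
    simp only [SimpleGraph.boxProd_adj, Equiv.prodCongr_apply, Prod.map_fst, Prod.map_snd]
    constructor
    · rintro (⟨h1, h2⟩ | ⟨h1, h2⟩)
      · exact Or.inl ⟨h1, congrArg _ h2⟩
      · exact Or.inr ⟨h1, congrArg _ h2⟩
    · rintro (⟨h1, h2⟩ | ⟨h1, h2⟩)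
      · exact Or.inl ⟨h1, congrArg ULift.down h2⟩
      · exact Or.inr ⟨h1, congrArg ULift.down h2⟩
  set Sl : Finset (ULift.{u2} V × ULift.{u1} V') :=
    S.map (Equiv.ulift.symm.prodCongr Equiv.ulift.symm).toEmbedding with hSl
  have hcoe : (↑Sl : Set (ULift.{u2} V × ULift.{u1} V')) =
      ⇑(Equiv.ulift.symm.prodCongr Equiv.ulift.symm) '' ↑S := by
    rw [hSl, coe_map]
    rfl
  have hSlZF : IsZeroForcingSet (Gl □ Gl') ↑Sl := by
    intro v
    rw [hcoe]
    exact zfs_map _ hee hSzf v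
  have hEl : ∃ a b, Gl.Adj a b := by
    obtain ⟨a, b, hab⟩ := hG
    exact ⟨ULift.up a, ULift.up b, hab⟩
  have hEl' : ∃ a b, Gl'.Adj a b := by
    obtain ⟨a, b, hab⟩ := hG'
    exact ⟨ULift.up a, ULift.up b, hab⟩
  have h1 := main_aux (Fintype.card (ULift.{u2} V) + Fintype.card (ULift.{u1} V'))
    Gl Gl' le_rfl hEl hEl' Sl hSlZF
  have h2 : tau G G' ≤ tau Gl Gl' :=
    tau_le_equiv Equiv.ulift.symm Equiv.ulift.symm G Gl G' Gl' heV heV'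
  have h3 : Sl.card = S.card := card_map _
  omega

end final

/-- `Z(G □ G') ≥ τ + 1`, where `τ` is the minimum cardinality of a set
`B ⊆ V(G) × V(G')` meeting `F × F'` for every fort `F` of `G` and fort `F'` of `G'`. -/
theorem zfNumber_boxProd_ge_tau_add_one {V V' : Type*} [Fintype V] [Fintype V']
    (G : SimpleGraph V) (G' : SimpleGraph V')
    (hG : ∃ u v, G.Adj u v) (hG' : ∃ u v, G'.Adj u v) :
    sInf {k | ∃ B : Finset (V × V'),
        (∀ (F : Finset V) (F' : Finset V'), IsFort G F → IsFort G' F' →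
          ∃ p ∈ B, p ∈ F ×ˢ F') ∧ B.card = k} + 1 ≤ zfNumber (G □ G') :=
  final_aux G G' hG hG'
end

section
/- Let G and G' be finite simple graphs with nonempty vertex sets. Then Z*(G) · Z(G') ≤ Z(G □ G'). -/
open Finset

lemma zf_empty_false {V : Type*} (G : SimpleGraph V) (v : V)
    (h : ZFForced G (∅ : Set V) v) : False := by
  induction h with
  | init v hv => exact hv
  | force u w _ _ _ ihu _ => exact ihu

lemma fort_proj {V V' : Type*} (G : SimpleGraph V) (G' : SimpleGraph V')
    (F : Finset V) (hF : IsFort G F) (S : Set (V × V')) (S' : Set V')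
    (hS' : ∀ p : V × V', p ∈ S → p.1 ∈ F → p.2 ∈ S')
    (p : V × V') (hp : ZFForced (G □ G') S p) : p.1 ∈ F → ZFForced G' S' p.2 := by
  induction hp with
  | init q hq => exact fun h => ZFForced.init _ (hS' q hq h)
  | force u w hadj hu hnbrs ihu ihnbrs =>
    intro hwF
    rcases SimpleGraph.boxProd_adj.mp hadj with ⟨hadj1, heq2⟩ | ⟨hadj2, heq1⟩
    · by_cases huF : u.1 ∈ F
      · exact heq2 ▸ ihu huF
      · have hne := hF.2 u.1 huF
        have hex : ∃ y, y ∈ F ∧ G.Adj u.1 y ∧ y ≠ w.1 := by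
          by_contra hc
          push_neg at hc
          exact hne ⟨w.1, ⟨hwF, hadj1⟩, fun x hx => hc x hx.1 hx.2⟩
        obtain ⟨y, hyF, hyadj, hyne⟩ := hex
        have h1 : (G □ G').Adj u (y, u.2) :=
          SimpleGraph.boxProd_adj.mpr (Or.inl ⟨hyadj, rfl⟩)
        have h2 : (y, u.2) ≠ w := fun h => hyne (by rw [← h])
        have := ihnbrs (y, u.2) h1 h2 hyF
        exact heq2 ▸ this
    · have hu2 : ZFForced G' S' u.2 := ihu (by rw [heq1]; exact hwF)
      refine ZFForced.force u.2 w.2 hadj2 hu2 ?_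
      intro x hx hxne
      have h1 : (G □ G').Adj u (u.1, x) :=
        SimpleGraph.boxProd_adj.mpr (Or.inr ⟨hx, rfl⟩)
      have h2 : (u.1, x) ≠ w := fun h => hxne (by rw [← h])
      exact ihnbrs (u.1, x) h1 h2 (by rw [heq1]; exact hwF)

/-- `Z*(G) · Z(G') ≤ Z(G □ G')`. -/
theorem fracZ_mul_zfNumber_le {V V' : Type*} [Fintype V] [Fintype V']
    [Nonempty V] [Nonempty V'] (G : SimpleGraph V) (G' : SimpleGraph V') :
    fracZ G * (zfNumber G' : ℝ) ≤ (zfNumber (G □ G') : ℝ) := by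
  classical
  have hZ'ne : {k | ∃ S : Finset V', IsZeroForcingSet G' ↑S ∧ S.card = k}.Nonempty :=
    ⟨_, Finset.univ, fun v => ZFForced.init v (by simp), rfl⟩
  have hZ'pos : 0 < zfNumber G' := by
    rcases Nat.eq_zero_or_pos (zfNumber G') with h0 | h
    · exfalso
      rw [zfNumber, Nat.sInf_eq_zero] at h0
      rcases h0 with h0 | h0
      · obtain ⟨S, hS, hcard⟩ := h0
        rw [Finset.card_eq_zero] at hcard
        subst hcard
        exact zf_empty_false G' (Classical.arbitrary V')
          (by simpa using hS (Classical.arbitrary V'))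
      · rw [h0] at hZ'ne; exact Set.not_nonempty_empty hZ'ne
    · exact h
  have hZ'posR : (0 : ℝ) < (zfNumber G' : ℝ) := by exact_mod_cast hZ'pos
  have hPne : {k | ∃ S : Finset (V × V'), IsZeroForcingSet (G □ G') ↑S ∧ S.card = k}.Nonempty :=
    ⟨_, Finset.univ, fun v => ZFForced.init v (by simp), rfl⟩
  obtain ⟨S, hSzf, hScard⟩ := Nat.sInf_mem hPne
  have hScard' : S.card = zfNumber (G □ G') := hScard
  set n : V → ℕ := fun v => (S.filter (fun p => p.1 = v)).card with hn
  have hfort : ∀ F : Finset V, IsFort G F → zfNumber G' ≤ ∑ v ∈ F, n v := by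
    intro F hF
    set S' : Finset V' := (S.filter (fun p => p.1 ∈ F)).image Prod.snd with hS'def
    have hS'zf : IsZeroForcingSet G' ↑S' := by
      intro v'
      obtain ⟨v0, hv0⟩ := hF.1
      refine fort_proj G G' F hF ↑S ↑S' ?_ (v0, v') (hSzf (v0, v')) hv0
      intro p hp hpF
      simp only [hS'def, Finset.coe_image, Set.mem_image, Finset.mem_coe, Finset.mem_filter]
      exact ⟨p, ⟨hp, hpF⟩, rfl⟩
    have hle : zfNumber G' ≤ S'.card := Nat.sInf_le ⟨S', hS'zf, rfl⟩
    have hle2 : S'.card ≤ (S.filter (fun p => p.1 ∈ F)).card := Finset.card_image_le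
    have heq : (S.filter (fun p => p.1 ∈ F)).card =
        ∑ v ∈ F, ((S.filter (fun p => p.1 ∈ F)).filter (fun p => p.1 = v)).card :=
      Finset.card_eq_sum_card_fiberwise (fun p hp => (Finset.mem_filter.mp hp).2)
    have hle3 : ∀ v ∈ F, ((S.filter (fun p => p.1 ∈ F)).filter (fun p => p.1 = v)).card ≤ n v := by
      intro v _
      refine Finset.card_le_card ?_
      intro p hp
      simp only [Finset.mem_filter] at hp ⊢
      exact ⟨hp.1.1, hp.2⟩
    exact le_trans hle (le_trans hle2 (le_trans (le_of_eq heq) (Finset.sum_le_sum hle3)))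
  have htot : ∑ v, n v = S.card :=
    (Finset.card_eq_sum_card_fiberwise (fun p _ => Finset.mem_univ p.1)).symm
  have hmem : ((S.card : ℝ) / (zfNumber G' : ℝ)) ∈ {x : ℝ | ∃ ω : V → ℝ, (∀ v, 0 ≤ ω v) ∧
      (∀ F : Finset V, IsFort G F → 1 ≤ ∑ v ∈ F, ω v) ∧ x = ∑ v, ω v} := by
    refine ⟨fun v => (n v : ℝ) / (zfNumber G' : ℝ),
      fun v => div_nonneg (Nat.cast_nonneg _) (Nat.cast_nonneg _), ?_, ?_⟩
    · intro F hF
      rw [← Finset.sum_div, le_div_iff₀ hZ'posR, one_mul]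
      calc (zfNumber G' : ℝ) ≤ ((∑ v ∈ F, n v : ℕ) : ℝ) := Nat.cast_le.mpr (hfort F hF)
        _ = ∑ v ∈ F, (n v : ℝ) := by push_cast; ring
    · rw [← Finset.sum_div, ← htot]
      push_cast
      ring
  have hbdd : BddBelow {x : ℝ | ∃ ω : V → ℝ, (∀ v, 0 ≤ ω v) ∧
      (∀ F : Finset V, IsFort G F → 1 ≤ ∑ v ∈ F, ω v) ∧ x = ∑ v, ω v} := by
    refine ⟨0, ?_⟩
    rintro x ⟨ω, hω, -, rfl⟩
    exact Finset.sum_nonneg fun v _ => hω v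
  have hfle : fracZ G ≤ (S.card : ℝ) / (zfNumber G' : ℝ) := csInf_le hbdd hmem
  calc fracZ G * (zfNumber G' : ℝ)
      ≤ ((S.card : ℝ) / (zfNumber G' : ℝ)) * (zfNumber G' : ℝ) :=
        mul_le_mul_of_nonneg_right hfle hZ'posR.le
    _ = (S.card : ℝ) := div_mul_cancel₀ _ hZ'posR.ne'
    _ = (zfNumber (G □ G') : ℝ) := by rw [hScard']
end

section
/- Let G be a finite simple graph with nonempty vertex set. Then z_G = ft(G), where z_G is the maximum number of parts in a failed zero forcing partition of G. -/
open Finset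

lemma fort_not_forced {V : Type*} (G : SimpleGraph V) (S : Set V) (F : Finset V)
    (hF : IsFort G F) (hd : ∀ v ∈ F, v ∉ S) : ∀ w, ZFForced G S w → w ∉ F := by
  intro w hw
  induction hw with
  | init v hv => exact fun h => hd v h hv
  | force u w hadj hu hall ihu ihall =>
    intro hwF
    refine hF.2 u ihu ⟨w, ⟨hwF, hadj⟩, ?_⟩
    rintro y ⟨hyF, hyadj⟩
    by_contra hne
    exact ihall y hyadj hne hyF

lemma not_zfs_iff {V : Type*} [Fintype V] (G : SimpleGraph V) (S : Set V) :
    ¬ IsZeroForcingSet G S ↔ ∃ F : Finset V, IsFort G F ∧ ∀ v ∈ F, v ∉ S := by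
  classical
  constructor
  · intro h
    rw [IsZeroForcingSet, not_forall] at h
    obtain ⟨v₀, hv₀⟩ := h
    refine ⟨Finset.univ.filter (fun v => ¬ ZFForced G S v), ⟨⟨v₀, by simp [hv₀]⟩, ?_⟩, ?_⟩
    · intro v hv
      simp only [mem_filter, mem_univ, true_and, not_not] at hv
      rintro ⟨u, ⟨huF, huadj⟩, huniq⟩
      simp only [mem_filter, mem_univ, true_and] at huF
      refine huF (ZFForced.force v u huadj hv ?_)
      intro x hxadj hxne
      by_contra hx
      exact hxne (huniq x ⟨by simp [hx], hxadj⟩)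
    · intro v hv
      simp only [mem_filter, mem_univ, true_and] at hv
      exact fun hvS => hv (ZFForced.init v hvS)
  · rintro ⟨F, hF, hd⟩ hzfs
    obtain ⟨v, hv⟩ := hF.1
    exact fort_not_forced G S F hF hd v (hzfs v) hv

lemma card_le_of_pwd {V : Type*} [Fintype V] [DecidableEq V] (𝒞 : Finset (Finset V))
    (hne : ∀ F ∈ 𝒞, F.Nonempty) (hd : (↑𝒞 : Set (Finset V)).Pairwise Disjoint) :
    𝒞.card ≤ Fintype.card V := by
  classical
  rw [← Finset.card_attach]
  refine Finset.card_le_card_of_injOn (fun p => (hne p.1 p.2).choose) (fun _ _ => mem_univ _) ?_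
  intro p _ q _ hpq
  by_contra hne'
  have h1 := (hne p.1 p.2).choose_spec
  have h2 := (hne q.1 q.2).choose_spec
  have : p.1 ≠ q.1 := fun h => hne' (Subtype.ext h)
  simp only at hpq
  simpa using (hd p.2 q.2 this).le_bot (Finset.mem_inter.2 ⟨h1, hpq ▸ h2⟩)

/-- `z_G = ft(G)`: the maximum number of parts in a failed zero forcing
partition of `G` equals the fort number of `G`. -/
theorem failedZFPartition_eq_fortNumber {V : Type*} [Fintype V] [DecidableEq V] [Nonempty V]
    (G : SimpleGraph V) :
    sSup {k | ∃ Pa : Finset (Finset V), (∀ P ∈ Pa, P.Nonempty) ∧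
        (↑Pa : Set (Finset V)).Pairwise Disjoint ∧ (∀ v : V, ∃ P ∈ Pa, v ∈ P) ∧
        (∀ P ∈ Pa, ¬ IsZeroForcingSet G ↑(Finset.univ \ P)) ∧ Pa.card = k}
      = fortNumber G := by
  classical
  have bddF : BddAbove {k | ∃ 𝒞 : Finset (Finset V), (∀ F ∈ 𝒞, IsFort G F) ∧
      (↑𝒞 : Set (Finset V)).Pairwise Disjoint ∧ 𝒞.card = k} := by
    refine ⟨Fintype.card V, ?_⟩
    rintro k ⟨𝒞, h1, h2, rfl⟩
    exact card_le_of_pwd 𝒞 (fun F hF => (h1 F hF).1) h2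
  have bddP : BddAbove {k | ∃ Pa : Finset (Finset V), (∀ P ∈ Pa, P.Nonempty) ∧
        (↑Pa : Set (Finset V)).Pairwise Disjoint ∧ (∀ v : V, ∃ P ∈ Pa, v ∈ P) ∧
        (∀ P ∈ Pa, ¬ IsZeroForcingSet G ↑(Finset.univ \ P)) ∧ Pa.card = k} := by
    refine ⟨Fintype.card V, ?_⟩
    rintro k ⟨Pa, h1, h2, _, _, rfl⟩
    exact card_le_of_pwd Pa h1 h2
  apply le_antisymm
  · apply csSup_le'
    rintro k ⟨Pa, hne, hdisj, hcov, hfail, rfl⟩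
    have hforts : ∀ P ∈ Pa, ∃ F : Finset V, IsFort G F ∧ F ⊆ P := by
      intro P hP
      obtain ⟨F, hF, hFS⟩ := (not_zfs_iff G _).1 (hfail P hP)
      refine ⟨F, hF, fun v hv => ?_⟩
      have := hFS v hv
      simpa using this
    choose f hf1 hf2 using hforts
    set 𝒞 := Pa.attach.image (fun p => f p.1 p.2) with h𝒞
    have hinj : Set.InjOn (fun p : {x // x ∈ Pa} => f p.1 p.2) ↑Pa.attach := by
      intro p _ q _ hpq
      by_contra hne'
      have hpq' : p.1 ≠ q.1 := fun h => hne' (Subtype.ext h)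
      obtain ⟨v, hv⟩ := (hf1 p.1 p.2).1
      have hv' : v ∈ f q.1 q.2 := by simp only at hpq; rw [← hpq]; exact hv
      simpa using (hdisj p.2 q.2 hpq').le_bot
        (Finset.mem_inter.2 ⟨hf2 p.1 p.2 hv, hf2 q.1 q.2 hv'⟩)
    apply le_csSup bddF
    refine ⟨𝒞, ?_, ?_, ?_⟩
    · intro F hF
      obtain ⟨p, _, rfl⟩ := Finset.mem_image.1 hF
      exact hf1 p.1 p.2
    · intro A hA B hB hAB
      obtain ⟨p, _, rfl⟩ := Finset.mem_image.1 hA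
      obtain ⟨q, _, rfl⟩ := Finset.mem_image.1 hB
      have hpq : p.1 ≠ q.1 := fun h => hAB (by cases Subtype.ext h; rfl)
      exact Finset.disjoint_of_subset_left (hf2 p.1 p.2)
        (Finset.disjoint_of_subset_right (hf2 q.1 q.2) (hdisj p.2 q.2 hpq))
    · rw [h𝒞, Finset.card_image_of_injOn hinj, Finset.card_attach]
  · apply csSup_le'
    rintro k ⟨𝒞, hfort, hdisj, rfl⟩
    rcases Finset.eq_empty_or_nonempty 𝒞 with rfl | ⟨F₀, hF₀⟩
    · simp
    set rest := Finset.univ \ 𝒞.sup id with hrest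
    set Pa := insert (F₀ ∪ rest) (𝒞.erase F₀) with hPa
    have hrd : ∀ F ∈ 𝒞, Disjoint rest F := by
      intro F hF
      refine Finset.disjoint_left.2 fun v hv hvF => ?_
      rw [hrest, Finset.mem_sdiff] at hv
      exact hv.2 (Finset.mem_sup.2 ⟨F, hF, hvF⟩)
    have hnotin : F₀ ∪ rest ∉ 𝒞.erase F₀ := by
      intro h
      have hFne : F₀ ∪ rest ≠ F₀ := (Finset.mem_erase.1 h).1
      have : Disjoint (F₀ ∪ rest) F₀ :=
        hdisj (Finset.mem_coe.2 ((Finset.mem_erase.1 h).2)) hF₀ hFne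
      obtain ⟨v, hv⟩ := (hfort F₀ hF₀).1
      simpa using this.le_bot (Finset.mem_inter.2 ⟨Finset.mem_union_left _ hv, hv⟩)
    have hsub : ∀ P ∈ Pa, ∃ F : Finset V, IsFort G F ∧ F ⊆ P := by
      intro P hP
      rcases Finset.mem_insert.1 hP with rfl | hP'
      · exact ⟨F₀, hfort F₀ hF₀, Finset.subset_union_left⟩
      · exact ⟨P, hfort P (Finset.mem_of_mem_erase hP'), le_refl _⟩
    apply le_csSup bddP
    refine ⟨Pa, ?_, ?_, ?_, ?_, ?_⟩
    · intro P hP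
      obtain ⟨F, hF, hFP⟩ := hsub P hP
      exact hF.1.mono hFP
    · intro A hA B hB hAB
      simp only [hPa, Finset.coe_insert, Set.mem_insert_iff, Finset.mem_coe] at hA hB
      rcases hA with rfl | hA <;> rcases hB with rfl | hB
      · exact absurd rfl hAB
      · have hB𝒞 := Finset.mem_of_mem_erase hB
        have hBne : F₀ ≠ B := fun h => (Finset.mem_erase.1 hB).1 h.symm
        exact Finset.disjoint_union_left.2 ⟨hdisj hF₀ (Finset.mem_coe.2 hB𝒞) hBne, hrd B hB𝒞⟩
      · have hA𝒞 := Finset.mem_of_mem_erase hA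
        have hAne : A ≠ F₀ := (Finset.mem_erase.1 hA).1
        exact (Finset.disjoint_union_left.2
          ⟨hdisj hF₀ (Finset.mem_coe.2 hA𝒞) hAne.symm, hrd A hA𝒞⟩).symm
      · exact hdisj (Finset.mem_coe.2 (Finset.mem_of_mem_erase hA))
          (Finset.mem_coe.2 (Finset.mem_of_mem_erase hB)) hAB
    · intro v
      by_cases hv : v ∈ 𝒞.sup id
      · obtain ⟨F, hF, hvF⟩ := Finset.mem_sup.1 hv
        rcases eq_or_ne F F₀ with rfl | hFne
        · exact ⟨F ∪ rest, Finset.mem_insert_self _ _, Finset.mem_union_left _ hvF⟩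
        · exact ⟨F, Finset.mem_insert_of_mem (Finset.mem_erase.2 ⟨hFne, hF⟩), hvF⟩
      · exact ⟨F₀ ∪ rest, Finset.mem_insert_self _ _,
          Finset.mem_union_right _ (by rw [hrest]; simp [hv])⟩
    · intro P hP
      obtain ⟨F, hF, hFP⟩ := hsub P hP
      refine (not_zfs_iff G _).2 ⟨F, hF, fun v hv => ?_⟩
      simp only [Finset.coe_sdiff, Set.mem_diff, not_and, not_not, Finset.coe_univ]
      intro
      exact hFP hv
    · rw [hPa, Finset.card_insert_of_notMem hnotin,
        Finset.card_erase_of_mem hF₀]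
      have := Finset.card_pos.2 ⟨F₀, hF₀⟩
      omega
end
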